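/- arXiv:2011.11364 — 11 statements merged into one kernel-verified Lean document; each statement's English description precedes it below -/
import Mathlib

section
/- Let P_1, …, P_N be PVMs on ℂ^d, where P_i has outcome set Fin n_i. If the PVMs pairwise commute, i.e. P_i(a) * P_l(b) = P_l(b) * P_i(a) for all i, l and all outcomes a, b, then they are jointly measurable; moreover the family G defined on tuples j ∈ ∏_{i=1}^N Fin n_i by G j = P_1(j_1) * P_2(j_2) * ⋯ * P_N(j_N) is itself a PVM and is a joint measurement for P_1, …, P_N. -/
open Matrix ComplexOrder

/-- A POVM on `ℂ^d` with finite outcome set `J`. -/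
def IsPOVM {ι : Type} [Fintype ι] [DecidableEq ι] {J : Type} [Fintype J]
    (E : J → Matrix ι ι ℂ) : Prop :=
  (∀ j, (E j).PosSemidef) ∧ ∑ j, E j = 1

/-- A PVM: a POVM all of whose effects are orthogonal projections. -/
def IsPVM {ι : Type} [Fintype ι] [DecidableEq ι] {J : Type} [Fintype J]
    (E : J → Matrix ι ι ℂ) : Prop :=
  IsPOVM E ∧ ∀ j, (E j).IsHermitian ∧ E j * E j = E j

/-- `G` is a joint measurement for the POVMs `M i`. -/
def IsJointMeasurement {d N : ℕ} {n : Fin N → ℕ}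
    (M : ∀ i, Fin (n i) → Matrix (Fin d) (Fin d) ℂ)
    (G : (∀ k, Fin (n k)) → Matrix (Fin d) (Fin d) ℂ) : Prop :=
  IsPOVM G ∧ ∀ (i : Fin N) (a : Fin (n i)),
    ∑ j ∈ Finset.univ.filter (fun j : ∀ k, Fin (n k) => j i = a), G j = M i a

/-- The POVMs `M i` are jointly measurable (compatible). -/
def JointlyMeasurable {d N : ℕ} {n : Fin N → ℕ}
    (M : ∀ i, Fin (n i) → Matrix (Fin d) (Fin d) ℂ) : Prop :=
  ∃ G, IsJointMeasurement M G


section Aux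

variable {R : Type*} [Semiring R]

lemma sum_listOfFn_prod {N : ℕ} : ∀ {n : Fin N → ℕ} (f : ∀ i, Fin (n i) → R),
    ∑ j : (∀ k, Fin (n k)), (List.ofFn fun i => f i (j i)).prod
      = (List.ofFn fun i => ∑ b, f i b).prod := by
  induction N with
  | zero => intro n f; simp
  | succ N ih =>
    intro n f
    rw [← Equiv.sum_comp (Fin.consEquiv fun i => Fin (n i))
        (fun j => (List.ofFn fun i => f i (j i)).prod), Fintype.sum_prod_type]
    have hterm : ∀ (a : Fin (n 0)) (t : ∀ i : Fin N, Fin (n i.succ)),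
        (List.ofFn fun i => f i ((Fin.consEquiv fun i => Fin (n i)) (a, t) i)).prod
          = f 0 a * (List.ofFn fun i : Fin N => f i.succ (t i)).prod := by
      intro a t
      simp [List.ofFn_succ, Fin.consEquiv]
    simp only [hterm]
    rw [List.ofFn_succ, List.prod_cons, ← ih (fun i b => f i.succ b)]
    rw [Finset.sum_mul]
    exact Finset.sum_congr rfl fun a _ => (Finset.mul_sum _ _ _).symm

end Aux

lemma listOfFn_prod_eq_single {M : Type*} [Monoid M] : ∀ {N : ℕ} (g : Fin N → M) (i : Fin N),
    (∀ k, k ≠ i → g k = 1) → (List.ofFn g).prod = g i := by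
  intro N
  induction N with
  | zero => exact fun g i => i.elim0
  | succ N ih =>
    intro g i h
    rw [List.ofFn_succ, List.prod_cons]
    induction i using Fin.cases with
    | zero =>
      have ht : (List.ofFn fun k : Fin N => g k.succ).prod = 1 := by
        apply List.prod_eq_one
        intro x hx
        rw [List.mem_ofFn] at hx
        obtain ⟨k, rfl⟩ := hx
        exact h k.succ (Fin.succ_ne_zero k)
      rw [ht, mul_one]
    | succ i =>
      rw [h 0 (Ne.symm (Fin.succ_ne_zero i)), one_mul]
      exact ih (fun k => g k.succ) i fun k hk =>
        h k.succ (by simpa [Fin.succ_inj] using hk)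

lemma listProd_proj {ι : Type} [Fintype ι] [DecidableEq ι] :
    ∀ (l : List (Matrix ι ι ℂ)),
    (∀ A ∈ l, A.IsHermitian ∧ A * A = A) → (∀ A ∈ l, ∀ B ∈ l, A * B = B * A) →
    (l.prod).IsHermitian ∧ l.prod * l.prod = l.prod
  | [], _, _ => by simp [Matrix.isHermitian_one]
  | A :: t, h1, h2 => by
    have hA := h1 A (by simp)
    obtain ⟨hH, hI⟩ := listProd_proj t
      (fun B hB => h1 B (by simp [hB]))
      (fun B hB C hC => h2 B (by simp [hB]) C (by simp [hC]))
    have hc : A * t.prod = t.prod * A :=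
      Commute.list_prod_right t A (fun x hx => h2 A (by simp) x (by simp [hx]))
    rw [List.prod_cons]
    constructor
    · show (A * t.prod)ᴴ = A * t.prod
      rw [Matrix.conjTranspose_mul, hH.eq, hA.1.eq, ← hc]
    · calc A * t.prod * (A * t.prod) = A * (t.prod * A * t.prod) := by
            rw [mul_assoc, mul_assoc]
        _ = A * (A * t.prod * t.prod) := by rw [← hc]
        _ = A * A * (t.prod * t.prod) := by rw [mul_assoc, mul_assoc]
        _ = A * t.prod := by rw [hA.2, hI]

set_option maxHeartbeats 1000000 in
/-- Pairwise commuting PVMs are jointly measurable, and the ordered product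
`G j = P 0 (j 0) * P 1 (j 1) * ⋯ * P (N-1) (j (N-1))` is itself a PVM which is a joint
measurement for them. -/
theorem pairwise_commuting_PVMs_are_jointly_measurable
    {d N : ℕ} {n : Fin N → ℕ}
    (P : ∀ i, Fin (n i) → Matrix (Fin d) (Fin d) ℂ)
    (hPVM : ∀ i, IsPVM (P i))
    (hcomm : ∀ (i l : Fin N) (a : Fin (n i)) (b : Fin (n l)),
      P i a * P l b = P l b * P i a) :
    JointlyMeasurable P ∧
      IsPVM (fun j : ∀ k, Fin (n k) => (List.ofFn fun i => P i (j i)).prod) ∧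
      IsJointMeasurement P (fun j : ∀ k, Fin (n k) => (List.ofFn fun i => P i (j i)).prod) := by
  set G : (∀ k, Fin (n k)) → Matrix (Fin d) (Fin d) ℂ :=
    fun j => (List.ofFn fun i => P i (j i)).prod with hGdef
  -- each G j is a Hermitian projection
  have hproj : ∀ j, (G j).IsHermitian ∧ G j * G j = G j := by
    intro j
    apply listProd_proj
    · intro A hA
      rw [List.mem_ofFn] at hA
      obtain ⟨i, rfl⟩ := hA
      exact (hPVM i).2 (j i)
    · intro A hA B hB
      rw [List.mem_ofFn] at hA
      rw [List.mem_ofFn] at hB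
      obtain ⟨i, rfl⟩ := hA
      obtain ⟨l, rfl⟩ := hB
      exact hcomm i l (j i) (j l)
  have hpsd : ∀ j, (G j).PosSemidef := by
    intro j
    obtain ⟨hH, hI⟩ := hproj j
    have := Matrix.posSemidef_conjTranspose_mul_self (G j)
    rwa [hH.eq, hI] at this
  have hsum : ∑ j, G j = 1 := by
    rw [hGdef, sum_listOfFn_prod P]
    apply List.prod_eq_one
    intro x hx
    rw [List.mem_ofFn] at hx
    obtain ⟨i, rfl⟩ := hx
    exact (hPVM i).1.2
  have hmarg : ∀ (i : Fin N) (a : Fin (n i)),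
      ∑ j ∈ Finset.univ.filter (fun j : ∀ k, Fin (n k) => j i = a), G j = P i a := by
    intro i a
    classical
    set Q : ∀ k, Fin (n k) → Matrix (Fin d) (Fin d) ℂ :=
      fun k b => if h : k = i then (if b = h.symm ▸ a then P k b else 0) else P k b with hQdef
    have step1 : ∑ j ∈ Finset.univ.filter (fun j : ∀ k, Fin (n k) => j i = a), G j
        = ∑ j : ∀ k, Fin (n k), (List.ofFn fun k => Q k (j k)).prod := by
      rw [Finset.sum_filter]
      refine Finset.sum_congr rfl fun j _ => ?_
      by_cases hj : j i = a
      · rw [if_pos hj]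
        have hQ : ∀ k, Q k (j k) = P k (j k) := by
          intro k
          rcases eq_or_ne k i with rfl | hk
          · simp [hQdef, hj]
          · simp [hQdef, hk]
        simp only [hQ, hGdef]
      · rw [if_neg hj]
        have h0 : Q i (j i) = 0 := by simp [hQdef, hj]
        refine (List.prod_eq_zero ?_).symm
        rw [List.mem_ofFn]
        exact ⟨i, h0⟩
    rw [step1, sum_listOfFn_prod Q]
    have := listOfFn_prod_eq_single (fun k => ∑ b, Q k b) i (by
      intro k hk
      simp [hQdef, hk, (hPVM k).1.2])
    rw [this]
    simp [hQdef]
  refine ⟨⟨G, ⟨⟨hpsd, hsum⟩, hmarg⟩⟩, ⟨⟨hpsd, hsum⟩, hproj⟩, ⟨hpsd, hsum⟩, hmarg⟩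
end

section
/- Let P_1, …, P_N be PVMs on ℂ^d, where P_i has outcome set Fin n_i. If P_1, …, P_N are jointly measurable (i.e. there exists a POVM G indexed by tuples whose i-th marginals are the P_i), then the PVMs pairwise commute: P_i(a) * P_l(b) = P_l(b) * P_i(a) for all i, l and all outcomes a, b. -/
open Matrix ComplexOrder

section Aux

variable {ι : Type} [Fintype ι] [DecidableEq ι]

omit [DecidableEq ι] in
/-- A sum of positive semidefinite matrices is positive semidefinite. -/
lemma psd_sum' {J : Type} [Fintype J] {E : J → Matrix ι ι ℂ} (h : ∀ j, (E j).PosSemidef)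
    (s : Finset J) : (∑ j ∈ s, E j).PosSemidef := by
  classical
  induction s using Finset.induction with
  | empty => simpa using Matrix.PosSemidef.zero
  | insert _ _ hj ih => rw [Finset.sum_insert hj]; exact (h _).add ih

/-- If two PSD matrices sum to zero, each is zero. -/
lemma psd_add_eq_zero' {M N : Matrix ι ι ℂ} (hM : M.PosSemidef) (hN : N.PosSemidef)
    (h : M + N = 0) : M = 0 := by
  have hx : ∀ x, M *ᵥ x = 0 := by
    intro x
    rw [← hM.dotProduct_mulVec_zero_iff]
    have h1 := hM.dotProduct_mulVec_nonneg x
    have h2 := hN.dotProduct_mulVec_nonneg x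
    have : star x ⬝ᵥ M *ᵥ x + star x ⬝ᵥ N *ᵥ x = 0 := by
      rw [← dotProduct_add, ← add_mulVec, h, zero_mulVec, dotProduct_zero]
    have hneg : star x ⬝ᵥ M *ᵥ x = -(star x ⬝ᵥ N *ᵥ x) := eq_neg_of_add_eq_zero_left this
    have : star x ⬝ᵥ M *ᵥ x ≤ 0 := by rw [hneg]; exact neg_nonpos.mpr h2
    exact le_antisymm this h1
  ext i j
  have := congrFun (hx (Pi.single j 1)) i
  simpa using this

/-- If `A` is PSD, `Q` is an orthogonal projection, and `Q - A` is PSD, then `Q`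
absorbs `A` on both sides. -/
lemma psd_le_proj' {A Q : Matrix ι ι ℂ} (hA : A.PosSemidef) (hQ : Q.IsHermitian)
    (hQ2 : Q * Q = Q) (hle : (Q - A).PosSemidef) : A * Q = A ∧ Q * A = A := by
  set R := (1 : Matrix ι ι ℂ) - Q with hR
  have hRH : Rᴴ = R := by simp [hR, hQ.eq]
  have h1 : (R * A * R).PosSemidef := by
    have := hA.conjTranspose_mul_mul_same R; rwa [hRH] at this
  have h2 : (R * (Q - A) * R).PosSemidef := by
    have := hle.conjTranspose_mul_mul_same R; rwa [hRH] at this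
  have hsum : R * A * R + R * (Q - A) * R = 0 := by
    have : R * A * R + R * (Q - A) * R = R * Q * R := by noncomm_ring
    rw [this, hR]
    simp [Matrix.sub_mul, Matrix.mul_sub, hQ2]
  have hz : R * A * R = 0 := psd_add_eq_zero' h1 h2 hsum
  obtain ⟨B, hB⟩ : ∃ B : Matrix ι ι ℂ, A = Bᴴ * B := by
    open scoped MatrixOrder in
    obtain ⟨B, hB⟩ := CStarAlgebra.nonneg_iff_eq_star_mul_self.mp hA.nonneg
    exact ⟨B, hB⟩
  have hBR : B * R = 0 := by
    rw [← conjTranspose_mul_self_eq_zero, conjTranspose_mul, hRH]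
    calc R * Bᴴ * (B * R) = R * A * R := by rw [hB]; noncomm_ring
      _ = 0 := hz
  have hAR : A * R = 0 := by
    rw [hB, Matrix.mul_assoc, hBR, Matrix.mul_zero]
  have hAQ : A * Q = A := by
    have : A * (1 - Q) = 0 := hAR
    rw [Matrix.mul_sub, Matrix.mul_one, sub_eq_zero] at this
    exact this.symm
  refine ⟨hAQ, ?_⟩
  calc Q * A = (Aᴴ * Qᴴ)ᴴ := by simp
    _ = (A * Q)ᴴ := by rw [hA.isHermitian.eq, hQ.eq]
    _ = A := by rw [hAQ, hA.isHermitian.eq]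

/-- Distinct effects of a PVM are orthogonal. -/
lemma pvm_orth {J : Type} [Fintype J] [DecidableEq J] {E : J → Matrix ι ι ℂ}
    (hE : IsPVM E) {a b : J} (hab : a ≠ b) : E a * E b = 0 := by
  set Q := (1 : Matrix ι ι ℂ) - E b with hQdef
  have hQH : Q.IsHermitian := Matrix.isHermitian_one.sub (hE.2 b).1
  have hQ2 : Q * Q = Q := by
    rw [hQdef, Matrix.sub_mul, Matrix.one_mul, Matrix.mul_sub, Matrix.mul_one,
      (hE.2 b).2]
    abel
  have hmem : a ∈ Finset.univ.erase b := Finset.mem_erase.mpr ⟨hab, Finset.mem_univ a⟩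
  have hsub : (Q - E a).PosSemidef := by
    have h1 : ∑ c ∈ (Finset.univ.erase b).erase a, E c + E a = ∑ c ∈ Finset.univ.erase b, E c :=
      Finset.sum_erase_add _ _ hmem
    have h2 : ∑ c ∈ Finset.univ.erase b, E c + E b = ∑ c, E c :=
      Finset.sum_erase_add _ _ (Finset.mem_univ b)
    have : Q - E a = ∑ c ∈ (Finset.univ.erase b).erase a, E c := by
      rw [hQdef, ← hE.1.2, ← h2, ← h1]; abel
    rw [this]
    exact psd_sum' hE.1.1 _
  have := (psd_le_proj' (hE.1.1 a) hQH hQ2 hsub).1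
  rw [hQdef, Matrix.mul_sub, Matrix.mul_one, sub_eq_self] at this
  exact this

end Aux

/-- Jointly measurable PVMs pairwise commute. -/
theorem jointly_measurable_PVMs_pairwise_commute
    {d N : ℕ} {n : Fin N → ℕ}
    (P : ∀ i, Fin (n i) → Matrix (Fin d) (Fin d) ℂ)
    (hPVM : ∀ i, IsPVM (P i))
    (hJM : JointlyMeasurable P) :
    ∀ (i l : Fin N) (a : Fin (n i)) (b : Fin (n l)),
      P i a * P l b = P l b * P i a := by
  classical
  obtain ⟨G, hGpovm, hmarg⟩ := hJM
  obtain ⟨hGpsd, -⟩ := hGpovm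
  -- Each effect absorbs G j when the outcome matches.
  have habs : ∀ (i : Fin N) (j : ∀ k, Fin (n k)),
      G j * P i (j i) = G j ∧ P i (j i) * G j = G j := by
    intro i j
    have hmem : j ∈ Finset.univ.filter (fun j' : ∀ k, Fin (n k) => j' i = j i) := by simp
    have h1 : ∑ j' ∈ (Finset.univ.filter (fun j' : ∀ k, Fin (n k) => j' i = j i)).erase j, G j'
        + G j = P i (j i) := by
      rw [Finset.sum_erase_add _ _ hmem]; exact hmarg i (j i)
    have hsub : (P i (j i) - G j).PosSemidef := by
      have : P i (j i) - G j
          = ∑ j' ∈ (Finset.univ.filter (fun j' : ∀ k, Fin (n k) => j' i = j i)).erase j, G j' := by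
        rw [← h1]; abel
      rw [this]; exact psd_sum' hGpsd _
    exact psd_le_proj' (hGpsd j) ((hPVM i).2 (j i)).1 ((hPVM i).2 (j i)).2 hsub
  -- Effects annihilate G j when the outcome does not match.
  have hzero : ∀ (i : Fin N) (a : Fin (n i)) (j : ∀ k, Fin (n k)), j i ≠ a →
      G j * P i a = 0 := by
    intro i a j hne
    calc G j * P i a = G j * (P i (j i) * P i a) := by
          rw [← Matrix.mul_assoc, (habs i j).1]
      _ = 0 := by rw [pvm_orth (hPVM i) hne, Matrix.mul_zero]
  have hzero' : ∀ (i : Fin N) (a : Fin (n i)) (j : ∀ k, Fin (n k)), j i ≠ a →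
      P i a * G j = 0 := by
    intro i a j hne
    calc P i a * G j = (P i a * P i (j i)) * G j := by
          rw [Matrix.mul_assoc, (habs i j).2]
      _ = 0 := by rw [pvm_orth (hPVM i) (Ne.symm hne), Matrix.zero_mul]
  intro i l a b
  have lhs : P i a * P l b
      = ∑ j ∈ Finset.univ.filter
          (fun j : ∀ k, Fin (n k) => j i = a ∧ j l = b), G j := by
    rw [← hmarg i a, Finset.sum_mul]
    rw [Finset.sum_filter, Finset.sum_filter]
    apply Finset.sum_congr rfl
    intro j _
    by_cases h1 : j i = a
    · by_cases h2 : j l = b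
      · rw [if_pos h1, if_pos ⟨h1, h2⟩, ← h2, (habs l j).1]
      · rw [if_pos h1, if_neg (fun h => h2 h.2), hzero l b j h2]
    · rw [if_neg h1, if_neg (fun h => h1 h.1)]
  have rhs : P l b * P i a
      = ∑ j ∈ Finset.univ.filter
          (fun j : ∀ k, Fin (n k) => j i = a ∧ j l = b), G j := by
    rw [← hmarg l b, Finset.sum_mul]
    rw [Finset.sum_filter, Finset.sum_filter]
    apply Finset.sum_congr rfl
    intro j _
    by_cases h2 : j l = b
    · by_cases h1 : j i = a
      · rw [if_pos h2, if_pos ⟨h1, h2⟩, ← h1, (habs i j).1]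
      · rw [if_pos h2, if_neg (fun h => h1 h.1), hzero i a j h1]
    · rw [if_neg h2, if_neg (fun h => h2 h.2)]
  rw [lhs, rhs]
end

section
/- Let P_1, …, P_N be pairwise commuting PVMs on ℂ^d, where P_i has outcome set Fin n_i. Then the joint measurement is unique and projective: every POVM G indexed by tuples j ∈ ∏_{i=1}^N Fin n_i whose i-th marginals equal P_i satisfies G j = P_1(j_1) * P_2(j_2) * ⋯ * P_N(j_N) for every tuple j; in particular every effect of G is an orthogonal projection. -/
open Matrix ComplexOrder

section Aux

variable {ι : Type} [Fintype ι] [DecidableEq ι]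

/-- A matrix that is both PSD and negative-PSD is zero. -/
lemma aux_psd_neg_psd_eq_zero {A : Matrix ι ι ℂ} (h1 : A.PosSemidef)
    (h2 : (-A).PosSemidef) : A = 0 := by
  have hv : ∀ v : ι → ℂ, A *ᵥ v = 0 := by
    intro v
    rw [← h1.dotProduct_mulVec_zero_iff]
    have a := h1.dotProduct_mulVec_nonneg v
    have b := h2.dotProduct_mulVec_nonneg v
    rw [neg_mulVec, dotProduct_neg, neg_nonneg] at b
    exact le_antisymm b a
  ext i k
  have h := congrFun (hv (Pi.single k 1)) i
  simpa [Matrix.mulVec_single] using h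

/-- Sum of PSD matrices is PSD. -/
lemma aux_posSemidef_sum {J : Type} (s : Finset J) (f : J → Matrix ι ι ℂ)
    (h : ∀ j ∈ s, (f j).PosSemidef) : (∑ j ∈ s, f j).PosSemidef := by
  classical
  induction s using Finset.cons_induction with
  | empty => simpa using (Matrix.PosSemidef.zero : (0 : Matrix ι ι ℂ).PosSemidef)
  | cons a s ha ih =>
    rw [Finset.sum_cons]
    exact (h a (Finset.mem_cons_self a s)).add
      (ih fun j hj => h j (Finset.mem_cons_of_mem hj))

/-- A Hermitian idempotent is PSD. -/
lemma aux_psd_of_proj {Q : Matrix ι ι ℂ} (hH : Q.IsHermitian) (h2 : Q * Q = Q) :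
    Q.PosSemidef :=
  by have := posSemidef_conjTranspose_mul_self Q; rwa [hH.eq, h2] at this

/-- If `0 ≤ E ≤ Q` with `Q` a projection, then `Q` absorbs `E`. -/
lemma aux_absorb {E Q : Matrix ι ι ℂ} (hE : E.PosSemidef)
    (hQH : Q.IsHermitian) (hQ2 : Q * Q = Q) (hle : (Q - E).PosSemidef) :
    Q * E = E := by
  obtain ⟨B, hB⟩ : ∃ B : Matrix ι ι ℂ, E = Bᴴ * B := by
    open scoped MatrixOrder in exact CStarAlgebra.nonneg_iff_eq_star_mul_self.mp hE.nonneg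
  set R := (1 : Matrix ι ι ℂ) - Q with hRdef
  have hRH : Rᴴ = R := by
    rw [hRdef, conjTranspose_sub, conjTranspose_one, hQH.eq]
  have hRQ : R * Q = 0 := by rw [hRdef, sub_mul, one_mul, hQ2, sub_self]
  have h1 : (R * E * Rᴴ).PosSemidef := hE.mul_mul_conjTranspose_same R
  have h2 : (R * (Q - E) * Rᴴ).PosSemidef := hle.mul_mul_conjTranspose_same R
  have h3 : R * (Q - E) * Rᴴ = -(R * E * Rᴴ) := by
    rw [mul_sub, sub_mul, hRQ, zero_mul, zero_sub]
  rw [h3] at h2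
  have h4 : R * E * Rᴴ = 0 := aux_psd_neg_psd_eq_zero h1 h2
  rw [hRH, hB] at h4
  have h5 : (B * R)ᴴ * (B * R) = 0 := by
    rw [conjTranspose_mul, hRH]
    simpa only [Matrix.mul_assoc] using h4
  have h6 : B * R = 0 := conjTranspose_mul_self_eq_zero.mp h5
  have h7 : E * R = 0 := by rw [hB, Matrix.mul_assoc, h6, Matrix.mul_zero]
  have h8 : E * Q = E := by
    rw [hRdef, mul_sub, mul_one, sub_eq_zero] at h7
    exact h7.symm
  have h9 := congrArg conjTranspose h8
  rwa [conjTranspose_mul, hQH.eq, hE.1.eq] at h9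

variable {α : Type*}

lemma aux_list_absorb [Monoid α] :
    ∀ {m : ℕ} (f : Fin m → α) (X : α), (∀ i, f i * X = X) →
      (List.ofFn f).prod * X = X := by
  intro m
  induction m with
  | zero => intro f X _; simp
  | succ m ih =>
    intro f X h
    rw [List.ofFn_succ, List.prod_cons, mul_assoc, ih _ X (fun i => h i.succ), h 0]

lemma aux_list_cases [MonoidWithZero α] :
    ∀ {m : ℕ} (f : Fin m → α) (X : α), (∀ i, f i * X = X ∨ f i * X = 0) →
      ((List.ofFn f).prod * X = X ∨ (List.ofFn f).prod * X = 0) := by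
  intro m
  induction m with
  | zero => intro f X _; left; simp
  | succ m ih =>
    intro f X h
    rw [List.ofFn_succ, List.prod_cons, mul_assoc]
    rcases ih _ X (fun i => h i.succ) with h' | h'
    · rw [h']; exact h 0
    · rw [h', mul_zero]; right; rfl

lemma aux_list_kill [MonoidWithZero α] :
    ∀ {m : ℕ} (f : Fin m → α) (X : α), (∀ i, f i * X = X ∨ f i * X = 0) →
      (∃ i, f i * X = 0) → (List.ofFn f).prod * X = 0 := by
  intro m
  induction m with
  | zero => intro f X _ hex; exact absurd hex (by simp [Fin.isEmpty'.false])
  | succ m ih =>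
    intro f X h hex
    rw [List.ofFn_succ, List.prod_cons, mul_assoc]
    obtain ⟨i, hi⟩ := hex
    rcases Fin.eq_zero_or_eq_succ i with rfl | ⟨i', rfl⟩
    · rcases aux_list_cases _ X (fun i => h i.succ) with h' | h'
      · rw [h', hi]
      · rw [h', mul_zero]
    · rw [ih _ X (fun i => h i.succ) ⟨i', hi⟩, mul_zero]

end Aux

/-- For pairwise commuting PVMs, the joint measurement is unique and projective:
any POVM whose marginals are the `P i` is given by the ordered product of the effects,
and all its effects are orthogonal projections. -/
theorem joint_measurement_of_commuting_PVMs_unique_and_projective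
    {d N : ℕ} {n : Fin N → ℕ}
    (P : ∀ i, Fin (n i) → Matrix (Fin d) (Fin d) ℂ)
    (hPVM : ∀ i, IsPVM (P i))
    (hcomm : ∀ (i l : Fin N) (a : Fin (n i)) (b : Fin (n l)),
      P i a * P l b = P l b * P i a)
    (G : (∀ k, Fin (n k)) → Matrix (Fin d) (Fin d) ℂ)
    (hG : IsJointMeasurement P G) :
    (∀ j : ∀ k, Fin (n k), G j = (List.ofFn fun i => P i (j i)).prod) ∧
    (∀ j : ∀ k, Fin (n k), (G j).IsHermitian ∧ G j * G j = G j) := by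
  classical
  obtain ⟨⟨hGpsd, hGsum⟩, hmarg⟩ := hG
  -- orthogonality of PVM effects
  have horth : ∀ (i : Fin N) (a b : Fin (n i)), a ≠ b → P i a * P i b = 0 := by
    intro i a b hab
    have hHa := ((hPVM i).2 a).1
    have ha2 := ((hPVM i).2 a).2
    have hHb := ((hPVM i).2 b).1
    have hb2 := ((hPVM i).2 b).2
    have hQH : ((1 : Matrix (Fin d) (Fin d) ℂ) - P i a).IsHermitian :=
      Matrix.isHermitian_one.sub hHa
    have hQ2 : ((1 : Matrix (Fin d) (Fin d) ℂ) - P i a) * (1 - P i a) = 1 - P i a := by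
      rw [mul_sub, mul_one, sub_mul, one_mul, ha2, sub_self, sub_zero]
    have hEpsd : (P i b).PosSemidef := aux_psd_of_proj hHb hb2
    have hsum1 : P i a + (P i b + ∑ c ∈ (Finset.univ.erase a).erase b, P i c) = 1 := by
      rw [Finset.add_sum_erase _ _ (Finset.mem_erase.mpr ⟨Ne.symm hab, Finset.mem_univ b⟩),
        Finset.add_sum_erase _ _ (Finset.mem_univ a)]
      exact (hPVM i).1.2
    have hle : ((1 : Matrix (Fin d) (Fin d) ℂ) - P i a - P i b).PosSemidef := by
      have : (1 : Matrix (Fin d) (Fin d) ℂ) - P i a - P i b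
          = ∑ c ∈ (Finset.univ.erase a).erase b, P i c := by
        rw [← hsum1]; abel
      rw [this]
      exact aux_posSemidef_sum _ _ fun c _ =>
        aux_psd_of_proj ((hPVM i).2 c).1 ((hPVM i).2 c).2
    have habs : ((1 : Matrix (Fin d) (Fin d) ℂ) - P i a) * P i b = P i b :=
      aux_absorb hEpsd hQH hQ2 hle
    rw [sub_mul, one_mul, sub_eq_self] at habs
    exact habs
  -- each effect of the marginal absorbs G j on the left
  have fact1 : ∀ (j : ∀ k, Fin (n k)) (i : Fin N), P i (j i) * G j = G j := by
    intro j i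
    have hHi := ((hPVM i).2 (j i)).1
    have hi2 := ((hPVM i).2 (j i)).2
    set s := Finset.univ.filter (fun j' : ∀ k, Fin (n k) => j' i = j i) with hs
    have hjs : j ∈ s := by simp [hs]
    have hsum : G j + ∑ j' ∈ s.erase j, G j' = P i (j i) := by
      rw [Finset.add_sum_erase _ _ hjs]
      exact hmarg i (j i)
    have hle : (P i (j i) - G j).PosSemidef := by
      have : P i (j i) - G j = ∑ j' ∈ s.erase j, G j' := by rw [← hsum]; abel
      rw [this]
      exact aux_posSemidef_sum _ _ fun j' _ => hGpsd j'
    exact aux_absorb (hGpsd j) hHi hi2 hle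
  -- killing fact
  have fact2 : ∀ (j j' : ∀ k, Fin (n k)) (i : Fin N), j i ≠ j' i →
      P i (j i) * G j' = 0 := by
    intro j j' i hne
    rw [← fact1 j' i, ← Matrix.mul_assoc, horth i _ _ hne, Matrix.zero_mul]
  have main : ∀ j : ∀ k, Fin (n k), G j = (List.ofFn fun i => P i (j i)).prod := by
    intro j
    set Prd : Matrix (Fin d) (Fin d) ℂ := (List.ofFn fun i => P i (j i)).prod with hPrd
    have habs : Prd * G j = G j :=
      aux_list_absorb _ (G j) (fun i => fact1 j i)
    have hkill : ∀ j' : ∀ k, Fin (n k), j' ≠ j → Prd * G j' = 0 := by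
      intro j' hne
      have hex : ∃ i, j i ≠ j' i := by
        by_contra hc
        push_neg at hc
        exact hne (funext fun i => (hc i).symm)
      obtain ⟨i, hi⟩ := hex
      refine aux_list_kill _ (G j') ?_ ⟨i, fact2 j j' i hi⟩
      intro l
      by_cases hl : j l = j' l
      · left; rw [hl]; exact fact1 j' l
      · right; exact fact2 j j' l hl
    have : Prd = ∑ j', Prd * G j' := by
      rw [← Finset.mul_sum, hGsum, mul_one]
    rw [Finset.sum_eq_single_of_mem j (Finset.mem_univ j)
      (fun b _ hb => hkill b hb), habs] at this
    exact this.symm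
  refine ⟨main, fun j => ⟨(hGpsd j).1, ?_⟩⟩
  have habs : (List.ofFn fun i => P i (j i)).prod * G j = G j :=
    aux_list_absorb _ (G j) (fun i => fact1 j i)
  rw [main j] at habs ⊢
  exact habs
end

section
/- Two POVMs M_1 and M_2 on ℂ^d are jointly measurable if and only if there exist an ancilla dimension d_A, a density matrix σ on ℂ^{d_A}, and two PVMs P_1 and P_2 on ℂ^d ⊗ ℂ^{d_A} such that P_1 and P_2 commute elementwise (P_1(a) * P_2(b) = P_2(b) * P_1(a) for all outcomes a, b), P_1 is a Naimark extension of M_1 with ancilla state σ, and P_2 is a Naimark extension of M_2 with the same ancilla state σ. -/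
open Matrix ComplexOrder Kronecker

/-- A density matrix: positive semidefinite with trace 1. -/
def IsDensityMatrix {dA : ℕ} (σ : Matrix (Fin dA) (Fin dA) ℂ) : Prop :=
  σ.PosSemidef ∧ σ.trace = 1

/-- `P` is a Naimark extension of the POVM `M` with ancilla state `σ`. -/
def IsNaimarkExtension {d dA : ℕ} {J : Type} [Fintype J]
    (M : J → Matrix (Fin d) (Fin d) ℂ) (σ : Matrix (Fin dA) (Fin dA) ℂ)
    (P : J → Matrix (Fin d × Fin dA) (Fin d × Fin dA) ℂ) : Prop :=
  IsPVM P ∧ ∀ (ρ : Matrix (Fin d) (Fin d) ℂ) (j : J),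
    (ρ * M j).trace = ((ρ ⊗ₖ σ) * P j).trace

/-- Two POVMs are jointly measurable (compatible). -/
def JointlyMeasurable2 {d n₁ n₂ : ℕ}
    (M₁ : Fin n₁ → Matrix (Fin d) (Fin d) ℂ)
    (M₂ : Fin n₂ → Matrix (Fin d) (Fin d) ℂ) : Prop :=
  ∃ G : Fin n₁ × Fin n₂ → Matrix (Fin d) (Fin d) ℂ,
    IsPOVM G ∧ (∀ a, ∑ b, G (a, b) = M₁ a) ∧ (∀ b, ∑ a, G (a, b) = M₂ b)

namespace NaimarkAux

variable {d dA : ℕ}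

noncomputable def ptr (Y : Matrix (Fin d × Fin dA) (Fin d × Fin dA) ℂ) :
    Matrix (Fin d) (Fin d) ℂ :=
  Matrix.of fun l k => ∑ n, Y (l, n) (k, n)

lemma ptr_apply (Y : Matrix (Fin d × Fin dA) (Fin d × Fin dA) ℂ) (l k : Fin d) :
    ptr Y l k = ∑ n, Y (l, n) (k, n) := rfl

lemma trace_kron_one_mul (ρ : Matrix (Fin d) (Fin d) ℂ)
    (Y : Matrix (Fin d × Fin dA) (Fin d × Fin dA) ℂ) :
    ((ρ ⊗ₖ (1 : Matrix (Fin dA) (Fin dA) ℂ)) * Y).trace = (ρ * ptr Y).trace := by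
  simp only [Matrix.trace, Matrix.diag, Matrix.mul_apply, ptr_apply, kroneckerMap_apply,
    Matrix.one_apply, Fintype.sum_prod_type, mul_ite, mul_one, mul_zero, ite_mul, zero_mul,
    Finset.mul_sum, Finset.sum_ite_eq, Finset.sum_ite_eq', Finset.mem_univ, if_true]
  exact Finset.sum_congr rfl fun l _ => Finset.sum_comm

lemma ptr_posSemidef {Y : Matrix (Fin d × Fin dA) (Fin d × Fin dA) ℂ}
    (hY : Y.PosSemidef) : (ptr Y).PosSemidef := by
  · rw [Matrix.posSemidef_iff_dotProduct_mulVec] at hY ⊢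
    refine ⟨?_, fun v => ?_⟩
    · ext l k
      simp only [Matrix.conjTranspose_apply, ptr_apply, star_sum]
      exact Finset.sum_congr rfl fun n _ => hY.1.apply _ _
    have key : star v ⬝ᵥ (ptr Y).mulVec v =
        ∑ n : Fin dA, star (fun p : Fin d × Fin dA => if p.2 = n then v p.1 else 0) ⬝ᵥ
          Y.mulVec (fun p : Fin d × Fin dA => if p.2 = n then v p.1 else 0) := by
      simp only [dotProduct, mulVec, ptr_apply, Pi.star_apply, Fintype.sum_prod_type,
        apply_ite, star_zero, ite_mul, zero_mul, mul_ite, mul_zero, Finset.mul_sum,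
        Finset.sum_ite_eq, Finset.sum_ite_eq', Finset.mem_univ, if_true]
      have collapse : ∀ (x : Fin dA) (x₁ : Fin d),
          (∑ x₂ : Fin dA, ∑ x₃ : Fin d,
            if x₂ = x then star (v x₁) * (Y (x₁, x₂) (x₃, x) * v x₃) else 0)
          = ∑ x₃ : Fin d, star (v x₁) * (Y (x₁, x) (x₃, x) * v x₃) := by
        intro x x₁
        rw [Finset.sum_comm]
        simp
      simp only [collapse, Finset.sum_mul, Finset.mul_sum]
      exact (Finset.sum_congr rfl fun x _ => Finset.sum_comm).trans Finset.sum_comm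
    rw [key]
    exact Finset.sum_nonneg fun n _ => hY.2 _

lemma trace_ext {A B : Matrix (Fin d) (Fin d) ℂ}
    (h : ∀ ρ : Matrix (Fin d) (Fin d) ℂ, (ρ * A).trace = (ρ * B).trace) : A = B := by
  ext l k
  have := h (Matrix.single k l 1)
  simpa [Matrix.trace, Matrix.diag, Matrix.mul_apply, Matrix.single, ite_and,
    Finset.sum_ite_eq, Finset.sum_ite_eq'] using this

lemma ptr_sum {J : Type} [Fintype J] (f : J → Matrix (Fin d × Fin dA) (Fin d × Fin dA) ℂ) :
    ptr (∑ j, f j) = ∑ j, ptr (f j) := by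
  ext l k
  simp only [ptr_apply, Matrix.sum_apply, ptr_apply]
  exact Finset.sum_comm

lemma backward {n₁ n₂ : ℕ}
    (M₁ : Fin n₁ → Matrix (Fin d) (Fin d) ℂ)
    (M₂ : Fin n₂ → Matrix (Fin d) (Fin d) ℂ)
    (hM₁ : IsPOVM M₁)
    {σ : Matrix (Fin dA) (Fin dA) ℂ} (hσ : IsDensityMatrix σ)
    {P₁ : Fin n₁ → Matrix (Fin d × Fin dA) (Fin d × Fin dA) ℂ}
    {P₂ : Fin n₂ → Matrix (Fin d × Fin dA) (Fin d × Fin dA) ℂ}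
    (hcomm : ∀ a b, P₁ a * P₂ b = P₂ b * P₁ a)
    (h₁ : IsNaimarkExtension M₁ σ P₁) (h₂ : IsNaimarkExtension M₂ σ P₂) :
    JointlyMeasurable2 M₁ M₂ := by
  classical
  set s : Matrix (Fin dA) (Fin dA) ℂ := (open scoped MatrixOrder in CFC.sqrt σ) with hs_def
  have hs_mul : s * s = σ := open scoped MatrixOrder in CFC.sqrt_mul_sqrt_self σ hσ.1.nonneg
  have hsH : sᴴ = s := open scoped MatrixOrder in (CFC.sqrt_nonneg σ).posSemidef.1
  set B : Matrix (Fin d × Fin dA) (Fin d × Fin dA) ℂ := (1 : Matrix (Fin d) (Fin d) ℂ) ⊗ₖ s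
    with hB_def
  have hsHerm : s.IsHermitian := open scoped MatrixOrder in (CFC.sqrt_nonneg σ).posSemidef.1
  have hBH : Bᴴ = B := by
    ext ⟨l, m⟩ ⟨k, n⟩
    simp only [hB_def, Matrix.conjTranspose_apply, kroneckerMap_apply]
    rw [star_mul']
    congr 1
    · simp [Matrix.one_apply, apply_ite, eq_comm]
    · exact hsHerm.apply m n
  have hkron : ∀ ρ : Matrix (Fin d) (Fin d) ℂ,
      (ρ ⊗ₖ σ) = B * (ρ ⊗ₖ (1 : Matrix (Fin dA) (Fin dA) ℂ)) * B := by
    intro ρ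
    rw [hB_def, ← Matrix.mul_kronecker_mul, ← Matrix.mul_kronecker_mul]
    simp only [Matrix.one_mul, Matrix.mul_one, hs_mul]
  have key : ∀ (ρ : Matrix (Fin d) (Fin d) ℂ)
      (X : Matrix (Fin d × Fin dA) (Fin d × Fin dA) ℂ),
      ((ρ ⊗ₖ σ) * X).trace = (ρ * ptr (B * X * B)).trace := by
    intro ρ X
    rw [hkron ρ, ← trace_kron_one_mul]
    rw [Matrix.trace_mul_cycle, Matrix.trace_mul_cycle, ← mul_assoc, Matrix.trace_mul_comm]
  have hsum₁ : ∑ a, P₁ a = 1 := h₁.1.1.2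
  have hsum₂ : ∑ b, P₂ b = 1 := h₂.1.1.2
  have hΦ₁ : ∀ a, ptr (B * P₁ a * B) = M₁ a := fun a =>
    (trace_ext fun ρ => by rw [← key ρ (P₁ a), ← h₁.2 ρ a]).symm
  have hΦ₂ : ∀ b, ptr (B * P₂ b * B) = M₂ b := fun b =>
    (trace_ext fun ρ => by rw [← key ρ (P₂ b), ← h₂.2 ρ b]).symm
  have hmarg₁ : ∀ a, ∑ b, ptr (B * (P₁ a * P₂ b) * B) = M₁ a := by
    intro a
    have hsum : ∑ b, B * (P₁ a * P₂ b) * B = B * P₁ a * B := by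
      rw [← Finset.sum_mul, ← Finset.mul_sum, ← Finset.mul_sum, hsum₂, Matrix.mul_one]
    rw [← ptr_sum, hsum, hΦ₁ a]
  have hmarg₂ : ∀ b, ∑ a, ptr (B * (P₁ a * P₂ b) * B) = M₂ b := by
    intro b
    have hsum : ∑ a, B * (P₁ a * P₂ b) * B = B * P₂ b * B := by
      rw [← Finset.sum_mul, ← Finset.mul_sum, ← Finset.sum_mul, hsum₁, Matrix.one_mul]
    rw [← ptr_sum, hsum, hΦ₂ b]
  refine ⟨fun j => ptr (B * (P₁ j.1 * P₂ j.2) * B), ⟨?_, ?_⟩, fun a => hmarg₁ a,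
    fun b => hmarg₂ b⟩
  · rintro ⟨a, b⟩
    have hXH : (P₁ a * P₂ b)ᴴ = P₁ a * P₂ b := by
      rw [Matrix.conjTranspose_mul, (h₁.1.2 a).1, (h₂.1.2 b).1, ← hcomm]
    have hidem : (P₁ a * P₂ b) * (P₁ a * P₂ b) = P₁ a * P₂ b := by
      rw [mul_assoc (P₁ a) (P₂ b), ← mul_assoc (P₂ b) (P₁ a) (P₂ b), ← hcomm a b,
        mul_assoc (P₁ a) (P₂ b) (P₂ b), (h₂.1.2 b).2, ← mul_assoc, (h₁.1.2 a).2]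
    have hX : (P₁ a * P₂ b).PosSemidef := by
      have := Matrix.posSemidef_conjTranspose_mul_self (P₁ a * P₂ b)
      rwa [hXH, hidem] at this
    have hBXB : (B * (P₁ a * P₂ b) * B).PosSemidef := by
      have := hX.mul_mul_conjTranspose_same B
      rwa [hBH] at this
    exact ptr_posSemidef hBXB
  · rw [Fintype.sum_prod_type]
    calc ∑ a, ∑ b, ptr (B * (P₁ a * P₂ b) * B) = ∑ a, M₁ a :=
          Finset.sum_congr rfl fun a _ => hmarg₁ a
      _ = 1 := hM₁.2

end NaimarkAux

namespace NaimarkAux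

open scoped ComplexInnerProductSpace

lemma conj_diag_pvm {N : Type} [Fintype N] [DecidableEq N] {U : Matrix N N ℂ}
    (hUU : Uᴴ * U = 1) (hUUc : U * Uᴴ = 1) {f : N → ℂ} (hf : ∀ x, f x = 0 ∨ f x = 1) :
    (Uᴴ * Matrix.diagonal f * U).IsHermitian ∧
    (Uᴴ * Matrix.diagonal f * U) * (Uᴴ * Matrix.diagonal f * U) =
      Uᴴ * Matrix.diagonal f * U ∧
    (Uᴴ * Matrix.diagonal f * U).PosSemidef := by
  have hfstar : star f = f := funext fun x => by rcases hf x with h | h <;> simp [h]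
  have hff : (fun i => f i * f i) = f := funext fun x => by
    rcases hf x with h | h <;> simp [h]
  have hDH : (Matrix.diagonal f)ᴴ = Matrix.diagonal f := by
    rw [Matrix.diagonal_conjTranspose, hfstar]
  have hDD : Matrix.diagonal f * Matrix.diagonal f = Matrix.diagonal f := by
    rw [Matrix.diagonal_mul_diagonal, hff]
  have h1 : ∀ Z : Matrix N N ℂ, U * (Uᴴ * Z) = Z := fun Z => by
    rw [← mul_assoc, hUUc, Matrix.one_mul]
  refine ⟨?_, ?_, ?_⟩
  · show (Uᴴ * Matrix.diagonal f * U)ᴴ = _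
    rw [Matrix.conjTranspose_mul, Matrix.conjTranspose_mul, Matrix.conjTranspose_conjTranspose,
      hDH, ← mul_assoc]
  · simp only [mul_assoc]
    rw [h1 (Matrix.diagonal f * U), ← mul_assoc (Matrix.diagonal f) (Matrix.diagonal f), hDD]
  · have hkey : (Matrix.diagonal f * U)ᴴ * (Matrix.diagonal f * U) =
        Uᴴ * Matrix.diagonal f * U := by
      rw [Matrix.conjTranspose_mul, hDH, mul_assoc, ← mul_assoc (Matrix.diagonal f), hDD,
        ← mul_assoc]
    have := Matrix.posSemidef_conjTranspose_mul_self (Matrix.diagonal f * U)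
    rwa [hkey] at this

lemma forward {d n₁ n₂ : ℕ} (hn₁ : 0 < n₁) (hn₂ : 0 < n₂)
    (M₁ : Fin n₁ → Matrix (Fin d) (Fin d) ℂ) (M₂ : Fin n₂ → Matrix (Fin d) (Fin d) ℂ)
    (G : Fin n₁ × Fin n₂ → Matrix (Fin d) (Fin d) ℂ) (hG : IsPOVM G)
    (hm₁ : ∀ a, ∑ b, G (a, b) = M₁ a) (hm₂ : ∀ b, ∑ a, G (a, b) = M₂ b) :
    ∃ (dA : ℕ) (σ : Matrix (Fin dA) (Fin dA) ℂ), IsDensityMatrix σ ∧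
      ∃ (P₁ : Fin n₁ → Matrix (Fin d × Fin dA) (Fin d × Fin dA) ℂ)
        (P₂ : Fin n₂ → Matrix (Fin d × Fin dA) (Fin d × Fin dA) ℂ),
        (∀ a b, P₁ a * P₂ b = P₂ b * P₁ a) ∧
        IsNaimarkExtension M₁ σ P₁ ∧ IsNaimarkExtension M₂ σ P₂ := by
  classical
  set dA := n₁ * n₂ with hdA
  set ι : Fin n₁ × Fin n₂ ≃ Fin dA := finProdFinEquiv with hι
  set z₀ : Fin dA := ι (⟨0, hn₁⟩, ⟨0, hn₂⟩) with hz₀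
  set σ : Matrix (Fin dA) (Fin dA) ℂ :=
    Matrix.diagonal (fun m => if m = z₀ then 1 else 0) with hσ_def
  have hσ : IsDensityMatrix σ := by
    constructor
    · refine Matrix.posSemidef_diagonal_iff.mpr fun m => ?_
      split <;> norm_num
    · simp [hσ_def, Matrix.trace, Matrix.diag, Matrix.diagonal_apply]
  set sq : Fin n₁ × Fin n₂ → Matrix (Fin d) (Fin d) ℂ := fun j => (open scoped MatrixOrder in CFC.sqrt (G j)) with hsq
  have hsqH : ∀ j, (sq j)ᴴ = sq j := fun j => open scoped MatrixOrder in (CFC.sqrt_nonneg (G j)).posSemidef.1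
  have hsqm : ∀ j, sq j * sq j = G j := fun j => open scoped MatrixOrder in CFC.sqrt_mul_sqrt_self (G j) (hG.1 j).nonneg
  set W : Matrix (Fin d × Fin dA) (Fin d) ℂ :=
    Matrix.of (fun x k => sq (ι.symm x.2) x.1 k) with hW
  have hWapp : ∀ (x : Fin d × Fin dA) (k : Fin d), W x k = sq (ι.symm x.2) x.1 k :=
    fun x k => rfl
  have hstarW : ∀ (x : Fin d × Fin dA) (k : Fin d),
      star (W x k) = sq (ι.symm x.2) k x.1 := by
    intro x k
    rw [hWapp]
    exact (Matrix.conjTranspose_apply _ _ _).symm.trans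
      (congrFun (congrFun (hsqH (ι.symm x.2)) k) x.1)
  have hWW : Wᴴ * W = 1 := by
    ext k k'
    have e1 : (Wᴴ * W) k k' = ∑ m : Fin dA, ∑ l : Fin d,
        sq (ι.symm m) k l * sq (ι.symm m) l k' := by
      simp only [Matrix.mul_apply, Matrix.conjTranspose_apply, Fintype.sum_prod_type]
      rw [Finset.sum_comm]
      exact Finset.sum_congr rfl fun m _ => Finset.sum_congr rfl fun l _ => by
        rw [hstarW, hWapp]
    rw [e1]
    have e2 : ∀ m : Fin dA, ∑ l : Fin d, sq (ι.symm m) k l * sq (ι.symm m) l k'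
        = G (ι.symm m) k k' := fun m => by
      rw [← hsqm (ι.symm m), Matrix.mul_apply]
    simp only [e2]
    rw [Equiv.sum_comp ι.symm (fun j => G j k k'), ← Matrix.sum_apply k k' Finset.univ G, hG.2]
  -- orthonormal family indexed by the slice at `z₀`
  set v : Fin d × Fin dA → EuclideanSpace ℂ (Fin d × Fin dA) :=
    fun p => WithLp.toLp 2 (fun x => W x p.1) with hv_def
  have hinner : ∀ p q : Fin d × Fin dA, (inner ℂ (v p) (v q) : ℂ) = (Wᴴ * W) p.1 q.1 := by
    intro p q
    simp only [PiLp.inner_apply, RCLike.inner_apply, hv_def, Matrix.mul_apply,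
      Matrix.conjTranspose_apply]
    exact Finset.sum_congr rfl fun x _ => mul_comm _ _
  have hv : Orthonormal ℂ (Set.restrict {p : Fin d × Fin dA | p.2 = z₀} v) := by
    rw [orthonormal_iff_ite]
    rintro ⟨⟨k, m⟩, hk⟩ ⟨⟨k', m'⟩, hk'⟩
    simp only [Set.mem_setOf_eq] at hk hk'
    show inner ℂ (v (k, m)) (v (k', m')) = _
    rw [hinner, hWW]
    subst hk hk'
    simp [Matrix.one_apply, Subtype.ext_iff, Prod.ext_iff]
  obtain ⟨bb, hbb⟩ := hv.exists_orthonormalBasis_extension_of_card_eq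
    (by simp [finrank_euclideanSpace])
  set U : Matrix (Fin d × Fin dA) (Fin d × Fin dA) ℂ := Matrix.of (fun x y => bb y x) with hU
  have hUU : Uᴴ * U = 1 := by
    ext i j
    have h := (orthonormal_iff_ite.mp bb.orthonormal) i j
    rw [PiLp.inner_apply] at h
    simp only [RCLike.inner_apply] at h
    calc (Uᴴ * U) i j = ∑ x, (starRingEnd ℂ) (bb i x) * bb j x := by
          simp only [Matrix.mul_apply, Matrix.conjTranspose_apply]
          rfl
      _ = (1 : Matrix (Fin d × Fin dA) (Fin d × Fin dA) ℂ) i j := by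
          rw [Finset.sum_congr rfl fun x _ => mul_comm _ _, h]; simp [Matrix.one_apply]
  have hUUc : U * Uᴴ = 1 := mul_eq_one_comm.mp hUU
  have hUz : ∀ (x : Fin d × Fin dA) (k : Fin d), U x (k, z₀) = W x k := by
    intro x k
    have : bb (k, z₀) = v (k, z₀) := hbb (k, z₀) rfl
    calc U x (k, z₀) = bb (k, z₀) x := rfl
      _ = v (k, z₀) x := by rw [this]
      _ = W x k := rfl
  -- diagonal indicator functions
  set f₁ : Fin n₁ → (Fin d × Fin dA) → ℂ :=
    fun a x => if (ι.symm x.2).1 = a then 1 else 0 with hf₁_def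
  set f₂ : Fin n₂ → (Fin d × Fin dA) → ℂ :=
    fun b x => if (ι.symm x.2).2 = b then 1 else 0 with hf₂_def
  have hf₁ : ∀ a x, f₁ a x = 0 ∨ f₁ a x = 1 := fun a x => by
    by_cases h : (ι.symm x.2).1 = a <;> simp [hf₁_def, h]
  have hf₂ : ∀ b x, f₂ b x = 0 ∨ f₂ b x = 1 := fun b x => by
    by_cases h : (ι.symm x.2).2 = b <;> simp [hf₂_def, h]
  set P₁ : Fin n₁ → Matrix (Fin d × Fin dA) (Fin d × Fin dA) ℂ :=
    fun a => Uᴴ * Matrix.diagonal (f₁ a) * U with hP₁_def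
  set P₂ : Fin n₂ → Matrix (Fin d × Fin dA) (Fin d × Fin dA) ℂ :=
    fun b => Uᴴ * Matrix.diagonal (f₂ b) * U with hP₂_def
  have hprops₁ := fun a => conj_diag_pvm hUU hUUc (hf₁ a)
  have hprops₂ := fun b => conj_diag_pvm hUU hUUc (hf₂ b)
  have hmix : ∀ g h : (Fin d × Fin dA) → ℂ,
      (Uᴴ * Matrix.diagonal g * U) * (Uᴴ * Matrix.diagonal h * U) =
        Uᴴ * Matrix.diagonal (g * h) * U := by
    intro g h
    simp only [mul_assoc]
    rw [← mul_assoc U Uᴴ, hUUc, Matrix.one_mul, ← mul_assoc (Matrix.diagonal g),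
      Matrix.diagonal_mul_diagonal]
    rfl
  have hcomm : ∀ a b, P₁ a * P₂ b = P₂ b * P₁ a := by
    intro a b
    rw [hP₁_def, hP₂_def, hmix, hmix, mul_comm (f₁ a) (f₂ b)]
  -- sums of the diagonal projections
  have hsumd₁ : ∑ a, Matrix.diagonal (f₁ a) = (1 : Matrix (Fin d × Fin dA) (Fin d × Fin dA) ℂ) := by
    ext x y
    by_cases hxy : x = y
    · subst hxy
      simp [Matrix.sum_apply, Matrix.diagonal_apply, hf₁_def, Matrix.one_apply]
    · simp [Matrix.sum_apply, Matrix.diagonal_apply, hxy, Matrix.one_apply]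
  have hsumd₂ : ∑ b, Matrix.diagonal (f₂ b) = (1 : Matrix (Fin d × Fin dA) (Fin d × Fin dA) ℂ) := by
    ext x y
    by_cases hxy : x = y
    · subst hxy
      simp [Matrix.sum_apply, Matrix.diagonal_apply, hf₂_def, Matrix.one_apply]
    · simp [Matrix.sum_apply, Matrix.diagonal_apply, hxy, Matrix.one_apply]
  have hPsum₁ : ∑ a, P₁ a = 1 := by
    rw [hP₁_def, ← Finset.sum_mul, ← Finset.mul_sum, hsumd₁, Matrix.mul_one, hUU]
  have hPsum₂ : ∑ b, P₂ b = 1 := by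
    rw [hP₂_def, ← Finset.sum_mul, ← Finset.mul_sum, hsumd₂, Matrix.mul_one, hUU]
  -- the key conjugation identity
  have key2 : ∀ ρ : Matrix (Fin d) (Fin d) ℂ, U * (ρ ⊗ₖ σ) * Uᴴ = W * ρ * Wᴴ := by
    intro ρ
    ext i i'
    have lhs_eq : (U * (ρ ⊗ₖ σ) * Uᴴ) i i' =
        ∑ l, ∑ k, U i (l, z₀) * ρ l k * star (U i' (k, z₀)) := by
      simp only [Matrix.mul_apply, Matrix.conjTranspose_apply, kroneckerMap_apply,
        hσ_def, Matrix.diagonal_apply, Fintype.sum_prod_type, mul_ite, mul_one, mul_zero,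
        ite_mul, zero_mul, Finset.sum_ite_eq, Finset.sum_ite_eq', Finset.mem_univ, if_true,
        Finset.sum_mul, Finset.mul_sum]
      exact (Finset.sum_congr rfl fun k _ => by
        rw [Finset.sum_comm]
        exact Finset.sum_congr rfl fun l _ => by simp).trans Finset.sum_comm
    rw [lhs_eq]
    have rhs_eq : (W * ρ * Wᴴ) i i' =
        ∑ l, ∑ k, W i l * ρ l k * star (W i' k) := by
      simp only [Matrix.mul_apply, Matrix.conjTranspose_apply, Finset.sum_mul]
      exact Finset.sum_comm
    rw [rhs_eq]
    exact Finset.sum_congr rfl fun l _ => Finset.sum_congr rfl fun k _ => by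
      rw [hUz, hUz]
  have htd : ∀ (Z : Matrix (Fin d × Fin dA) (Fin d × Fin dA) ℂ) (g : (Fin d × Fin dA) → ℂ),
      (Z * Matrix.diagonal g).trace = ∑ x, Z x x * g x := by
    intro Z g
    simp only [Matrix.trace, Matrix.diag, Matrix.mul_apply, Matrix.diagonal_apply,
      mul_ite, mul_zero]
    exact Finset.sum_congr rfl fun x _ => by simp
  have htr : ∀ (ρ : Matrix (Fin d) (Fin d) ℂ) (g : (Fin d × Fin dA) → ℂ),
      ((ρ ⊗ₖ σ) * (Uᴴ * Matrix.diagonal g * U)).trace =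
        ((W * ρ * Wᴴ) * Matrix.diagonal g).trace := by
    intro ρ g
    have h1 : (ρ ⊗ₖ σ) * (Uᴴ * Matrix.diagonal g * U) =
        ((ρ ⊗ₖ σ) * Uᴴ * Matrix.diagonal g) * U := by
      simp only [mul_assoc]
    rw [h1, Matrix.trace_mul_comm, ← mul_assoc, ← mul_assoc, key2 ρ]
  have hdiagWRW : ∀ (ρ : Matrix (Fin d) (Fin d) ℂ) (p : Fin d) (m : Fin dA),
      (W * ρ * Wᴴ) (p, m) (p, m) = (sq (ι.symm m) * ρ * sq (ι.symm m)) p p := by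
    intro ρ p m
    simp only [Matrix.mul_apply, Matrix.conjTranspose_apply]
    refine Finset.sum_congr rfl fun k _ => ?_
    rw [hstarW]
    rfl
  have hGtr : ∀ (ρ : Matrix (Fin d) (Fin d) ℂ) (j : Fin n₁ × Fin n₂),
      (sq j * ρ * sq j).trace = (ρ * G j).trace := by
    intro ρ j
    rw [Matrix.trace_mul_cycle, Matrix.trace_mul_comm, hsqm j]
  have hN₁ : ∀ (ρ : Matrix (Fin d) (Fin d) ℂ) (a : Fin n₁),
      (ρ * M₁ a).trace = ((ρ ⊗ₖ σ) * P₁ a).trace := by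
    intro ρ a
    rw [hP₁_def, htr, htd]
    have e1 : ∑ x : Fin d × Fin dA, (W * ρ * Wᴴ) x x * f₁ a x
        = ∑ m : Fin dA, (if (ι.symm m).1 = a then
            (sq (ι.symm m) * ρ * sq (ι.symm m)).trace else 0) := by
      rw [Fintype.sum_prod_type, Finset.sum_comm]
      refine Finset.sum_congr rfl fun m _ => ?_
      by_cases h : (ι.symm m).1 = a
      · simp only [hf₁_def, h, if_true, mul_one, Matrix.trace, Matrix.diag]
        exact Finset.sum_congr rfl fun p _ => hdiagWRW ρ p m
      · simp [hf₁_def, h]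
    rw [e1, Equiv.sum_comp ι.symm
      (fun j : Fin n₁ × Fin n₂ => if j.1 = a then (sq j * ρ * sq j).trace else 0),
      Fintype.sum_prod_type, Finset.sum_comm]
    simp only [Finset.sum_ite_eq', Finset.mem_univ, if_true]
    rw [← hm₁ a, Finset.mul_sum, Matrix.trace_sum]
    exact Finset.sum_congr rfl fun b _ => (hGtr ρ (a, b)).symm
  have hN₂ : ∀ (ρ : Matrix (Fin d) (Fin d) ℂ) (b : Fin n₂),
      (ρ * M₂ b).trace = ((ρ ⊗ₖ σ) * P₂ b).trace := by
    intro ρ b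
    rw [hP₂_def, htr, htd]
    have e1 : ∑ x : Fin d × Fin dA, (W * ρ * Wᴴ) x x * f₂ b x
        = ∑ m : Fin dA, (if (ι.symm m).2 = b then
            (sq (ι.symm m) * ρ * sq (ι.symm m)).trace else 0) := by
      rw [Fintype.sum_prod_type, Finset.sum_comm]
      refine Finset.sum_congr rfl fun m _ => ?_
      by_cases h : (ι.symm m).2 = b
      · simp only [hf₂_def, h, if_true, mul_one, Matrix.trace, Matrix.diag]
        exact Finset.sum_congr rfl fun p _ => hdiagWRW ρ p m
      · simp [hf₂_def, h]
    rw [e1, Equiv.sum_comp ι.symm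
      (fun j : Fin n₁ × Fin n₂ => if j.2 = b then (sq j * ρ * sq j).trace else 0),
      Fintype.sum_prod_type]
    simp only [Finset.sum_ite_eq', Finset.mem_univ, if_true]
    rw [← hm₂ b, Finset.mul_sum, Matrix.trace_sum]
    exact Finset.sum_congr rfl fun a _ => (hGtr ρ (a, b)).symm
  exact ⟨dA, σ, hσ, P₁, P₂, hcomm,
    ⟨⟨⟨fun a => (hprops₁ a).2.2, hPsum₁⟩, fun a => ⟨(hprops₁ a).1, (hprops₁ a).2.1⟩⟩,
      fun ρ a => hN₁ ρ a⟩,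
    ⟨⟨⟨fun b => (hprops₂ b).2.2, hPsum₂⟩, fun b => ⟨(hprops₂ b).1, (hprops₂ b).2.1⟩⟩,
      fun ρ b => hN₂ ρ b⟩⟩


end NaimarkAux

/-- Two POVMs are jointly measurable iff there is a single Naimark extension, with one and the
same ancilla state, carrying them to a pair of elementwise commuting PVMs. -/
theorem two_POVMs_compatible_iff_commuting_Naimark_extensions
    {d n₁ n₂ : ℕ}
    (M₁ : Fin n₁ → Matrix (Fin d) (Fin d) ℂ)
    (M₂ : Fin n₂ → Matrix (Fin d) (Fin d) ℂ)
    (hM₁ : IsPOVM M₁) (hM₂ : IsPOVM M₂) :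
    JointlyMeasurable2 M₁ M₂ ↔
      ∃ (dA : ℕ) (σ : Matrix (Fin dA) (Fin dA) ℂ), IsDensityMatrix σ ∧
        ∃ (P₁ : Fin n₁ → Matrix (Fin d × Fin dA) (Fin d × Fin dA) ℂ)
          (P₂ : Fin n₂ → Matrix (Fin d × Fin dA) (Fin d × Fin dA) ℂ),
          (∀ (a : Fin n₁) (b : Fin n₂), P₁ a * P₂ b = P₂ b * P₁ a) ∧
          IsNaimarkExtension M₁ σ P₁ ∧ IsNaimarkExtension M₂ σ P₂ := by
  constructor
  · rintro ⟨G, hG, hm₁, hm₂⟩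
    by_cases hn : 0 < n₁ ∧ 0 < n₂
    · exact NaimarkAux.forward hn.1 hn.2 M₁ M₂ G hG hm₁ hm₂
    · -- degenerate case: one outcome set is empty, forcing `d = 0`
      have hd : d = 0 := by
        by_contra hd0
        have hd' : 0 < d := Nat.pos_of_ne_zero hd0
        rcases not_and_or.mp hn with h | h
        · have hn₁ : n₁ = 0 := Nat.eq_zero_of_not_pos h
          have h1 := hM₁.2
          have huniv : (Finset.univ : Finset (Fin n₁)) = ∅ := by
            subst hn₁; rfl
          rw [huniv, Finset.sum_empty] at h1
          have h00 := congrFun (congrFun h1 ⟨0, hd'⟩) ⟨0, hd'⟩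
          simp [Matrix.one_apply] at h00
        · have hn₂ : n₂ = 0 := Nat.eq_zero_of_not_pos h
          have h1 := hM₂.2
          have huniv : (Finset.univ : Finset (Fin n₂)) = ∅ := by
            subst hn₂; rfl
          rw [huniv, Finset.sum_empty] at h1
          have h00 := congrFun (congrFun h1 ⟨0, hd'⟩) ⟨0, hd'⟩
          simp [Matrix.one_apply] at h00
      subst hd
      have hmat : ∀ X Y : Matrix (Fin 0 × Fin 1) (Fin 0 × Fin 1) ℂ, X = Y := by
        intro X Y
        ext ⟨i, _⟩ j
        exact i.elim0
      have htr0 : ∀ X Y : Matrix (Fin 0) (Fin 0) ℂ, (X * Y).trace = 0 := by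
        intro X Y
        simp [Matrix.trace]
      have htr0' : ∀ Z W : Matrix (Fin 0 × Fin 1) (Fin 0 × Fin 1) ℂ, (Z * W).trace = 0 := by
        intro Z W
        rw [Matrix.trace]
        apply Finset.sum_eq_zero
        rintro ⟨i, _⟩ _
        exact i.elim0
      have hpsd : (0 : Matrix (Fin 0 × Fin 1) (Fin 0 × Fin 1) ℂ).PosSemidef := by
        constructor
        · exact hmat _ _
        · intro x
          simp [Matrix.mulVec, dotProduct]
      refine ⟨1, 1, ⟨Matrix.PosDef.one.posSemidef, by simp⟩, fun _ => 0, fun _ => 0,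
        fun a b => by simp, ⟨⟨⟨fun _ => hpsd, hmat _ _⟩, fun _ => ⟨hmat _ _, by simp⟩⟩,
          fun ρ j => by rw [htr0, htr0']⟩,
        ⟨⟨⟨fun _ => hpsd, hmat _ _⟩, fun _ => ⟨hmat _ _, by simp⟩⟩,
          fun ρ j => by rw [htr0, htr0']⟩⟩
  · rintro ⟨dA, σ, hσ, P₁, P₂, hcomm, h₁, h₂⟩
    exact NaimarkAux.backward M₁ M₂ hM₁ hσ hcomm h₁ h₂
end

section
/- Let A = {A(1), 1 − A(1)} and B = {B(1), 1 − B(1)} be two dichotomic POVMs on ℂ^d, so A(1), B(1) are Hermitian with 0 ≤ A(1) ≤ 1 and 0 ≤ B(1) ≤ 1. Let X = √(A(1)(1 − A(1))) and Y = √(B(1)(1 − B(1))) be the positive semidefinite square roots. If there exists a unitary d×d matrix W satisfying the three conditions (i) [A(1), B(1)] = Y(W X) − (W X)† Y, (ii) {A(1), Y W} − {X W†, B(1)} W = Y W − X, and (iii) [W A(1) W†, B(1)] + (W X) Y − Y (W X)† = 0 (where [·,·] is the commutator and {·,·} the anticommutator), then the POVMs A and B are jointly measurable. -/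
open Matrix ComplexOrder

lemma eig_le_one {d : ℕ} {A : Matrix (Fin d) (Fin d) ℂ} (hA : A.PosSemidef)
    (hA' : ((1 : Matrix (Fin d) (Fin d) ℂ) - A).PosSemidef) (i : Fin d) :
    hA.1.eigenvalues i ≤ 1 := by
  set v := (WithLp.equiv 2 _) (hA.1.eigenvectorBasis i) with hv
  have h1 := hA'.re_dotProduct_nonneg v
  have h2 := hA.1.eigenvalues_eq i
  rw [sub_mulVec, dotProduct_sub, map_sub, one_mulVec] at h1
  have h3 : (star v ⬝ᵥ v : ℂ) = 1 := by
    rw [hv]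
    change star (hA.1.eigenvectorBasis i).ofLp ⬝ᵥ (hA.1.eigenvectorBasis i).ofLp = (1 : ℂ)
    rw [dotProduct_comm, ← EuclideanSpace.inner_eq_star_dotProduct, inner_self_eq_norm_sq_to_K,
      hA.1.eigenvectorBasis.orthonormal.1 i]
    norm_num
  rw [h3] at h1
  norm_num at h1
  change _ = RCLike.re (star v ⬝ᵥ A *ᵥ v) at h2
  rw [h2, RCLike.re_to_complex]
  linarith

lemma commute_sqrt {d : ℕ} {A X : Matrix (Fin d) (Fin d) ℂ} (hA : A.PosSemidef)
    (hA' : ((1 : Matrix (Fin d) (Fin d) ℂ) - A).PosSemidef)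
    (hX : X.PosSemidef) (hX2 : X * X = A * (1 - A)) : A * X = X * A := by
  classical
  set U : Matrix (Fin d) (Fin d) ℂ := hA.1.eigenvectorUnitary.1 with hU
  have hUU : (star U) * U = 1 := (Unitary.mem_iff.mp hA.1.eigenvectorUnitary.2).1
  have hUU' : U * (star U) = 1 := (Unitary.mem_iff.mp hA.1.eigenvectorUnitary.2).2
  set ev := hA.1.eigenvalues with hev
  have hspec := hA.1.spectral_theorem
  rw [Unitary.conjStarAlgAut_apply, ← hU, ← hev] at hspec
  have hconj : ∀ (M N : Matrix (Fin d) (Fin d) ℂ),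
      (U * M * star U) * (U * N * star U) = U * (M * N) * star U := by
    intro M N
    linear_combination (norm := noncomm_ring) (U * M) * hUU * (N * star U)
  set g : Fin d → ℝ := fun i => Real.sqrt (ev i * (1 - ev i)) with hg
  set Z : Matrix (Fin d) (Fin d) ℂ :=
    U * diagonal (RCLike.ofReal ∘ g) * (star U) with hZ
  have hZpsd : Z.PosSemidef := by
    apply PosSemidef.mul_mul_conjTranspose_same
    refine posSemidef_diagonal_iff.mpr fun i ↦ ?_
    rw [Function.comp_apply, RCLike.nonneg_iff]
    constructor
    · simp only [RCLike.ofReal_re]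
      exact Real.sqrt_nonneg _
    · simp only [RCLike.ofReal_im]
  have hdd : ∀ (f f' : Fin d → ℝ), (diagonal (RCLike.ofReal ∘ f) : Matrix (Fin d) (Fin d) ℂ)
      * diagonal (RCLike.ofReal ∘ f') = diagonal (RCLike.ofReal ∘ (fun i => f i * f' i)) := by
    intro f f'
    rw [diagonal_mul_diagonal]
    refine congrArg diagonal (funext fun v => ?_)
    simp
  have hone : (diagonal (RCLike.ofReal ∘ fun i => (1:ℝ) - ev i) : Matrix (Fin d) (Fin d) ℂ)
      = 1 - diagonal (RCLike.ofReal ∘ ev) := by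
    ext i j
    by_cases h : i = j
    · subst h; simp [diagonal, Matrix.one_apply]
    · simp [diagonal, Matrix.one_apply, h]
  have hA1 : (1 : Matrix (Fin d) (Fin d) ℂ) - A
      = U * diagonal (RCLike.ofReal ∘ fun i => (1:ℝ) - ev i) * star U := by
    rw [hone, mul_sub, sub_mul, mul_one, hUU']
    rw [← hspec]
  have hZZ : Z * Z = A * (1 - A) := by
    rw [hZ, hconj, hdd]
    conv_rhs => rw [hA1]
    conv_rhs => rw [hspec]
    rw [hconj, hdd]
    congr 1
    refine congrArg _ (congrArg diagonal (funext fun v => ?_))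
    simp only [Function.comp_apply]
    rw [hg]
    rw [Real.mul_self_sqrt (mul_nonneg (hA.eigenvalues_nonneg v) (by linarith [eig_le_one hA hA' v]))]
  have hXZ : X = Z := by
    open scoped MatrixOrder Matrix.Norms.L2Operator in
    exact (CFC.sq_eq_sq_iff X Z hX.nonneg hZpsd.nonneg).mp (by rw [pow_two, pow_two, hX2, hZZ])
  have hAZ : A * Z = Z * A := by
    conv_lhs => rw [hspec, hZ, hconj]
    conv_rhs => rw [hspec, hZ, hconj]
    rw [hdd, hdd]
    congr 1
    refine congrArg _ (congrArg diagonal (funext fun v => ?_))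
    simp only [Function.comp_apply]
    ring
  rw [hXZ]; exact hAZ


/-- Sufficient condition for compatibility of two dichotomic POVMs
`A = {A₁, 1 - A₁}` and `B = {B₁, 1 - B₁}` in terms of a unitary `W`,
where `X = √(A₁(1-A₁))` and `Y = √(B₁(1-B₁))` are positive semidefinite square roots. -/
theorem dichotomic_compatibility_sufficient_condition
    {d : ℕ} (A₁ B₁ X Y W : Matrix (Fin d) (Fin d) ℂ)
    (hA₁ : A₁.PosSemidef) (hA₁' : ((1 : Matrix (Fin d) (Fin d) ℂ) - A₁).PosSemidef)
    (hB₁ : B₁.PosSemidef) (hB₁' : ((1 : Matrix (Fin d) (Fin d) ℂ) - B₁).PosSemidef)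
    (hX : X.PosSemidef) (hX2 : X * X = A₁ * (1 - A₁))
    (hY : Y.PosSemidef) (hY2 : Y * Y = B₁ * (1 - B₁))
    (hW : Wᴴ * W = 1 ∧ W * Wᴴ = 1)
    (c1 : A₁ * B₁ - B₁ * A₁ = Y * (W * X) - (W * X)ᴴ * Y)
    (c2 : (A₁ * (Y * W) + (Y * W) * A₁) - ((X * Wᴴ) * B₁ + B₁ * (X * Wᴴ)) * W
      = Y * W - X)
    (c3 : ((W * A₁ * Wᴴ) * B₁ - B₁ * (W * A₁ * Wᴴ)) + (W * X) * Y - Y * (W * X)ᴴ = 0) :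
    JointlyMeasurable2 ![A₁, 1 - A₁] ![B₁, 1 - B₁] := by
  have commA : A₁ * X = X * A₁ := commute_sqrt hA₁ hA₁' hX hX2
  have commB : B₁ * Y = Y * B₁ := commute_sqrt hB₁ hB₁' hY hY2
  have hXh : Xᴴ = X := hX.1
  have hYh : Yᴴ = Y := hY.1
  have hAh : A₁ᴴ = A₁ := hA₁.1
  have hBh : B₁ᴴ = B₁ := hB₁.1
  -- rewrite adjoints in hypotheses
  rw [conjTranspose_mul, hXh] at c1 c3
  -- the Naimark dilations
  set P : Matrix (Fin d ⊕ Fin d) (Fin d ⊕ Fin d) ℂ :=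
    fromBlocks A₁ X X (1 - A₁) with hPdef
  set Q : Matrix (Fin d ⊕ Fin d) (Fin d ⊕ Fin d) ℂ :=
    fromBlocks B₁ (Y * W) (Wᴴ * Y) (Wᴴ * (1 - B₁) * W) with hQdef
  have hPh : Pᴴ = P := by
    rw [hPdef, fromBlocks_conjTranspose, hAh, hXh, hA₁'.1]
  have hQh : Qᴴ = Q := by
    rw [hQdef, fromBlocks_conjTranspose, hBh]
    simp only [conjTranspose_mul, hYh, conjTranspose_conjTranspose, mul_assoc]
    rw [hB₁'.1]
  have hP2 : P * P = P := by
    rw [hPdef, fromBlocks_multiply]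
    have e11 : A₁ * A₁ + X * X = A₁ := by
      linear_combination (norm := noncomm_ring) hX2
    have e12 : A₁ * X + X * (1 - A₁) = X := by
      linear_combination (norm := noncomm_ring) commA
    have e21 : X * A₁ + (1 - A₁) * X = X := by
      linear_combination (norm := noncomm_ring) - commA
    have e22 : X * X + (1 - A₁) * (1 - A₁) = 1 - A₁ := by
      linear_combination (norm := noncomm_ring) hX2
    rw [e11, e12, e21, e22]
  have hQ2 : Q * Q = Q := by
    rw [hQdef, fromBlocks_multiply]
    have e11 : B₁ * B₁ + (Y * W) * (Wᴴ * Y) = B₁ := by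
      linear_combination (norm := noncomm_ring) hY2 + Y * hW.2 * Y
    have e12 : B₁ * (Y * W) + (Y * W) * (Wᴴ * (1 - B₁) * W) = Y * W := by
      linear_combination (norm := noncomm_ring) commB * W + Y * hW.2 * ((1 - B₁) * W) + hY2 * W - hY2 * W
    have e21 : (Wᴴ * Y) * B₁ + (Wᴴ * (1 - B₁) * W) * (Wᴴ * Y) = Wᴴ * Y := by
      linear_combination (norm := noncomm_ring) - Wᴴ * commB + (Wᴴ * (1 - B₁)) * hW.2 * Y
    have e22 : (Wᴴ * Y) * (Y * W) + (Wᴴ * (1 - B₁) * W) * (Wᴴ * (1 - B₁) * W)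
        = Wᴴ * (1 - B₁) * W := by
      linear_combination (norm := noncomm_ring) Wᴴ * hY2 * W + (Wᴴ * (1 - B₁)) * hW.2 * ((1 - B₁) * W)
    rw [e11, e12, e21, e22]
  have c2h := congrArg conjTranspose c2
  simp only [conjTranspose_sub, conjTranspose_add, conjTranspose_mul,
    conjTranspose_conjTranspose, hXh, hYh, hAh, hBh] at c2h
  have hPQ : P * Q = Q * P := by
    rw [hPdef, hQdef, fromBlocks_multiply, fromBlocks_multiply]
    have e11 : A₁ * B₁ + X * (Wᴴ * Y) = B₁ * A₁ + (Y * W) * X := by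
      linear_combination (norm := noncomm_ring) c1
    have e12 : A₁ * (Y * W) + X * (Wᴴ * (1 - B₁) * W) = B₁ * X + (Y * W) * (1 - A₁) := by
      linear_combination (norm := noncomm_ring) c2 + (X + B₁ * X) * hW.1
    have e21 : X * B₁ + (1 - A₁) * (Wᴴ * Y) = (Wᴴ * Y) * A₁ + (Wᴴ * (1 - B₁) * W) * X := by
      linear_combination (norm := noncomm_ring) - c2h - hW.1 * (X + X * B₁)
    have e22 : X * (Y * W) + (1 - A₁) * (Wᴴ * (1 - B₁) * W)
        = (Wᴴ * Y) * X + (Wᴴ * (1 - B₁) * W) * (1 - A₁) := by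
      linear_combination (norm := noncomm_ring) Wᴴ * c3 * W - hW.1 * (X * Y * W)
        + (Wᴴ * Y * X) * hW.1 - hW.1 * (A₁ * Wᴴ * B₁ * W) + (Wᴴ * B₁ * W * A₁) * hW.1
        - A₁ * hW.1 + hW.1 * A₁
    rw [e11, e12, e21, e22]
  -- the four commuting hermitian projections
  set PP : Fin 2 → Matrix (Fin d ⊕ Fin d) (Fin d ⊕ Fin d) ℂ := ![P, 1 - P] with hPP
  set QQ : Fin 2 → Matrix (Fin d ⊕ Fin d) (Fin d ⊕ Fin d) ℂ := ![Q, 1 - Q] with hQQ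
  have hPPh : ∀ a, (PP a)ᴴ = PP a := by
    intro a; fin_cases a <;> simp [hPP, hPh]
  have hQQh : ∀ a, (QQ a)ᴴ = QQ a := by
    intro a; fin_cases a <;> simp [hQQ, hQh]
  have hPP2 : ∀ a, PP a * PP a = PP a := by
    intro a; fin_cases a
    · simpa [hPP] using hP2
    · show (1 - P) * (1 - P) = 1 - P
      linear_combination (norm := noncomm_ring) hP2
  have hQQ2 : ∀ a, QQ a * QQ a = QQ a := by
    intro a; fin_cases a
    · simpa [hQQ] using hQ2
    · show (1 - Q) * (1 - Q) = 1 - Q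
      linear_combination (norm := noncomm_ring) hQ2
  have hcomm : ∀ a b, PP a * QQ b = QQ b * PP a := by
    intro a b; fin_cases a <;> fin_cases b
    · simpa [hPP, hQQ] using hPQ
    · show P * (1 - Q) = (1 - Q) * P
      linear_combination (norm := noncomm_ring) - hPQ
    · show (1 - P) * Q = Q * (1 - P)
      linear_combination (norm := noncomm_ring) - hPQ
    · show (1 - P) * (1 - Q) = (1 - Q) * (1 - P)
      linear_combination (norm := noncomm_ring) hPQ
  have hprodPsd : ∀ a b, (PP a * QQ b).PosSemidef := by
    intro a b
    have herm : (PP a * QQ b)ᴴ = PP a * QQ b := by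
      rw [conjTranspose_mul, hQQh, hPPh, ← hcomm]
    have idem : (PP a * QQ b) * (PP a * QQ b) = PP a * QQ b := by
      linear_combination (norm := noncomm_ring)
        (- PP a * hcomm a b * QQ b) + hPP2 a * (QQ b * QQ b) + PP a * hQQ2 b
    have key : PP a * QQ b = (PP a * QQ b)ᴴ * (PP a * QQ b) := by rw [herm, idem]
    rw [key]
    exact posSemidef_conjTranspose_mul_self _
  -- block-extraction helpers
  have tb_add : ∀ (M N : Matrix (Fin d ⊕ Fin d) (Fin d ⊕ Fin d) ℂ),
      (M + N).toBlocks₁₁ = M.toBlocks₁₁ + N.toBlocks₁₁ := fun _ _ => rfl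
  have tb_one : (1 : Matrix (Fin d ⊕ Fin d) (Fin d ⊕ Fin d) ℂ).toBlocks₁₁ = 1 := by
    rw [← fromBlocks_one (l := Fin d) (m := Fin d) (α := ℂ), toBlocks_fromBlocks₁₁]
  have tbP : ∀ a, (PP a).toBlocks₁₁ = ![A₁, 1 - A₁] a := by
    intro a; fin_cases a
    · show P.toBlocks₁₁ = A₁
      rw [hPdef, toBlocks_fromBlocks₁₁]
    · show (1 - P).toBlocks₁₁ = 1 - A₁
      have h : ((1 : Matrix (Fin d ⊕ Fin d) (Fin d ⊕ Fin d) ℂ) - P).toBlocks₁₁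
          = (1 : Matrix (Fin d ⊕ Fin d) (Fin d ⊕ Fin d) ℂ).toBlocks₁₁ - P.toBlocks₁₁ := rfl
      rw [h, tb_one, hPdef, toBlocks_fromBlocks₁₁]
  have tbQ : ∀ b, (QQ b).toBlocks₁₁ = ![B₁, 1 - B₁] b := by
    intro b; fin_cases b
    · show Q.toBlocks₁₁ = B₁
      rw [hQdef, toBlocks_fromBlocks₁₁]
    · show (1 - Q).toBlocks₁₁ = 1 - B₁
      have h : ((1 : Matrix (Fin d ⊕ Fin d) (Fin d ⊕ Fin d) ℂ) - Q).toBlocks₁₁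
          = (1 : Matrix (Fin d ⊕ Fin d) (Fin d ⊕ Fin d) ℂ).toBlocks₁₁ - Q.toBlocks₁₁ := rfl
      rw [h, tb_one, hQdef, toBlocks_fromBlocks₁₁]
  have hQsum : QQ 0 + QQ 1 = 1 := by
    show Q + (1 - Q) = 1
    abel
  have hPsum : PP 0 + PP 1 = 1 := by
    show P + (1 - P) = 1
    abel
  have margA : ∀ a, ∑ b, (PP a * QQ b).toBlocks₁₁ = ![A₁, 1 - A₁] a := by
    intro a
    rw [Fin.sum_univ_two, ← tb_add, ← mul_add, hQsum, mul_one, tbP]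
  have margB : ∀ b, ∑ a, (PP a * QQ b).toBlocks₁₁ = ![B₁, 1 - B₁] b := by
    intro b
    rw [Fin.sum_univ_two, ← tb_add, ← add_mul, hPsum, one_mul, tbQ]
  refine ⟨fun p => (PP p.1 * QQ p.2).toBlocks₁₁, ⟨fun p => ?_, ?_⟩, fun a => margA a, fun b => margB b⟩
  · exact (hprodPsd p.1 p.2).submatrix Sum.inl
  · rw [Fintype.sum_prod_type]
    calc (∑ a, ∑ b, (PP a * QQ b).toBlocks₁₁) = ∑ a, ![A₁, 1 - A₁] a := by
          refine Finset.sum_congr rfl fun a _ => margA a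
      _ = 1 := by rw [Fin.sum_univ_two]; show A₁ + (1 - A₁) = 1; abel
end

section
/- Let E be a Hermitian d×d complex matrix with 0 ≤ E ≤ 1 and let U be a unitary d×d matrix. On ℂ^d ⊗ ℂ², define the block matrix P(1) with blocks (in the ancilla index) P(1)_{00} = E, P(1)_{01} = −√(E(1−E)) U†, P(1)_{10} = −U √(E(1−E)), P(1)_{11} = U (1 − E) U†, where √(E(1−E)) is the positive semidefinite square root, and set P(2) = 1 − P(1). Then P(1) and P(2) are orthogonal projections (Hermitian idempotents), and with ancilla state |0⟩⟨0| = !![1,0;0,0] one has trace(ρ * E) = trace((ρ ⊗ |0⟩⟨0|) * P(1)) and trace(ρ * (1 − E)) = trace((ρ ⊗ |0⟩⟨0|) * P(2)) for every d×d complex matrix ρ; i.e. {P(1), P(2)} is a Naimark extension of the dichotomic POVM {E, 1 − E} with ancilla ℂ² and ancilla state |0⟩⟨0|. -/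
open Matrix ComplexOrder Kronecker

private lemma commute_of_commute_sq {n : ℕ} {S B : Matrix (Fin n) (Fin n) ℂ}
    (hS : S.PosSemidef) (h : B * (S * S) = S * S * B) : B * S = S * B := by
  have hH := hS.1
  set V : Matrix (Fin n) (Fin n) ℂ := (hH.eigenvectorUnitary : Matrix (Fin n) (Fin n) ℂ) with hV
  set D : Matrix (Fin n) (Fin n) ℂ := diagonal (RCLike.ofReal ∘ hH.eigenvalues) with hD
  have hspec : S = V * D * star V := hH.spectral_theorem
  have hVV : star V * V = 1 := Matrix.mem_unitaryGroup_iff'.mp hH.eigenvectorUnitary.2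
  have hVV' : V * star V = 1 := Matrix.mem_unitaryGroup_iff.mp hH.eigenvectorUnitary.2
  have c1 : ∀ X : Matrix (Fin n) (Fin n) ℂ, star V * (V * X) = X := fun X => by
    rw [← Matrix.mul_assoc, hVV, Matrix.one_mul]
  have c2 : ∀ X : Matrix (Fin n) (Fin n) ℂ, V * (star V * X) = X := fun X => by
    rw [← Matrix.mul_assoc, hVV', Matrix.one_mul]
  set F : Matrix (Fin n) (Fin n) ℂ := star V * B * V with hF
  have hSS : S * S = V * (D * D) * star V := by
    rw [hspec]
    simp only [Matrix.mul_assoc, c1]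
  have hFD2 : F * (D * D) = (D * D) * F := by
    rw [hSS] at h
    have key := congrArg (fun X => star V * X * V) h
    simp only [Matrix.mul_assoc, c1, c2, hVV, hVV', Matrix.mul_one] at key
    rw [hF]
    simp only [Matrix.mul_assoc]
    exact key
  have hFD : F * D = D * F := by
    ext i j
    have hij := congrFun (congrFun hFD2 i) j
    rw [hD, diagonal_mul_diagonal] at hij
    rw [Matrix.mul_diagonal, Matrix.diagonal_mul] at hij
    rw [hD, Matrix.mul_diagonal, Matrix.diagonal_mul]
    simp only [Function.comp] at hij ⊢
    by_cases hz : F i j = 0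
    · simp [hz]
    · have hsq : (hH.eigenvalues j : ℂ) * (hH.eigenvalues j : ℂ)
          = (hH.eigenvalues i : ℂ) * (hH.eigenvalues i : ℂ) := by
        have : F i j * ((hH.eigenvalues j : ℂ) * (hH.eigenvalues j : ℂ))
            = F i j * ((hH.eigenvalues i : ℂ) * (hH.eigenvalues i : ℂ)) :=
          hij.trans (mul_comm _ _)
        exact mul_left_cancel₀ hz this
      have hre : hH.eigenvalues j * hH.eigenvalues j
          = hH.eigenvalues i * hH.eigenvalues i := by
        exact_mod_cast hsq
      have heq : hH.eigenvalues j = hH.eigenvalues i := by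
        have h1 := hS.eigenvalues_nonneg i
        have h2 := hS.eigenvalues_nonneg j
        calc hH.eigenvalues j = Real.sqrt (hH.eigenvalues j * hH.eigenvalues j) :=
              (Real.sqrt_mul_self h2).symm
          _ = Real.sqrt (hH.eigenvalues i * hH.eigenvalues i) := by rw [hre]
          _ = hH.eigenvalues i := Real.sqrt_mul_self h1
      rw [heq]; ring
  have hBF : B = V * F * star V := by
    rw [hF]
    simp only [Matrix.mul_assoc, c2]
    rw [hVV', Matrix.mul_one]
  calc B * S = V * F * star V * (V * D * star V) := by rw [← hBF, ← hspec]
    _ = V * (F * D) * star V := by simp only [Matrix.mul_assoc, c1]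
    _ = V * (D * F) * star V := by rw [hFD]
    _ = V * D * star V * (V * F * star V) := by simp only [Matrix.mul_assoc, c1]
    _ = S * B := by rw [← hBF, ← hspec]

private lemma mE00_00 : (!![1, 0; 0, 0] : Matrix (Fin 2) (Fin 2) ℂ) * !![1, 0; 0, 0] = !![1, 0; 0, 0] := by
  ext i j; fin_cases i <;> fin_cases j <;> simp [Matrix.mul_apply, Fin.sum_univ_two]

private lemma mE00_01 : (!![1, 0; 0, 0] : Matrix (Fin 2) (Fin 2) ℂ) * !![0, 1; 0, 0] = !![0, 1; 0, 0] := by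
  ext i j; fin_cases i <;> fin_cases j <;> simp [Matrix.mul_apply, Fin.sum_univ_two]

private lemma mE00_10 : (!![1, 0; 0, 0] : Matrix (Fin 2) (Fin 2) ℂ) * !![0, 0; 1, 0] = 0 := by
  ext i j; fin_cases i <;> fin_cases j <;> simp [Matrix.mul_apply, Fin.sum_univ_two]

private lemma mE00_11 : (!![1, 0; 0, 0] : Matrix (Fin 2) (Fin 2) ℂ) * !![0, 0; 0, 1] = 0 := by
  ext i j; fin_cases i <;> fin_cases j <;> simp [Matrix.mul_apply, Fin.sum_univ_two]

private lemma mE01_00 : (!![0, 1; 0, 0] : Matrix (Fin 2) (Fin 2) ℂ) * !![1, 0; 0, 0] = 0 := by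
  ext i j; fin_cases i <;> fin_cases j <;> simp [Matrix.mul_apply, Fin.sum_univ_two]

private lemma mE01_01 : (!![0, 1; 0, 0] : Matrix (Fin 2) (Fin 2) ℂ) * !![0, 1; 0, 0] = 0 := by
  ext i j; fin_cases i <;> fin_cases j <;> simp [Matrix.mul_apply, Fin.sum_univ_two]

private lemma mE01_10 : (!![0, 1; 0, 0] : Matrix (Fin 2) (Fin 2) ℂ) * !![0, 0; 1, 0] = !![1, 0; 0, 0] := by
  ext i j; fin_cases i <;> fin_cases j <;> simp [Matrix.mul_apply, Fin.sum_univ_two]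

private lemma mE01_11 : (!![0, 1; 0, 0] : Matrix (Fin 2) (Fin 2) ℂ) * !![0, 0; 0, 1] = !![0, 1; 0, 0] := by
  ext i j; fin_cases i <;> fin_cases j <;> simp [Matrix.mul_apply, Fin.sum_univ_two]

private lemma mE10_00 : (!![0, 0; 1, 0] : Matrix (Fin 2) (Fin 2) ℂ) * !![1, 0; 0, 0] = !![0, 0; 1, 0] := by
  ext i j; fin_cases i <;> fin_cases j <;> simp [Matrix.mul_apply, Fin.sum_univ_two]

private lemma mE10_01 : (!![0, 0; 1, 0] : Matrix (Fin 2) (Fin 2) ℂ) * !![0, 1; 0, 0] = !![0, 0; 0, 1] := by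
  ext i j; fin_cases i <;> fin_cases j <;> simp [Matrix.mul_apply, Fin.sum_univ_two]

private lemma mE10_10 : (!![0, 0; 1, 0] : Matrix (Fin 2) (Fin 2) ℂ) * !![0, 0; 1, 0] = 0 := by
  ext i j; fin_cases i <;> fin_cases j <;> simp [Matrix.mul_apply, Fin.sum_univ_two]

private lemma mE10_11 : (!![0, 0; 1, 0] : Matrix (Fin 2) (Fin 2) ℂ) * !![0, 0; 0, 1] = 0 := by
  ext i j; fin_cases i <;> fin_cases j <;> simp [Matrix.mul_apply, Fin.sum_univ_two]

private lemma mE11_00 : (!![0, 0; 0, 1] : Matrix (Fin 2) (Fin 2) ℂ) * !![1, 0; 0, 0] = 0 := by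
  ext i j; fin_cases i <;> fin_cases j <;> simp [Matrix.mul_apply, Fin.sum_univ_two]

private lemma mE11_01 : (!![0, 0; 0, 1] : Matrix (Fin 2) (Fin 2) ℂ) * !![0, 1; 0, 0] = 0 := by
  ext i j; fin_cases i <;> fin_cases j <;> simp [Matrix.mul_apply, Fin.sum_univ_two]

private lemma mE11_10 : (!![0, 0; 0, 1] : Matrix (Fin 2) (Fin 2) ℂ) * !![0, 0; 1, 0] = !![0, 0; 1, 0] := by
  ext i j; fin_cases i <;> fin_cases j <;> simp [Matrix.mul_apply, Fin.sum_univ_two]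

private lemma mE11_11 : (!![0, 0; 0, 1] : Matrix (Fin 2) (Fin 2) ℂ) * !![0, 0; 0, 1] = !![0, 0; 0, 1] := by
  ext i j; fin_cases i <;> fin_cases j <;> simp [Matrix.mul_apply, Fin.sum_univ_two]

private lemma ctE00 : (!![1, 0; 0, 0] : Matrix (Fin 2) (Fin 2) ℂ)ᴴ = !![1, 0; 0, 0] := by
  ext i j; fin_cases i <;> fin_cases j <;> simp [Matrix.conjTranspose_apply]

private lemma ctE01 : (!![0, 1; 0, 0] : Matrix (Fin 2) (Fin 2) ℂ)ᴴ = !![0, 0; 1, 0] := by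
  ext i j; fin_cases i <;> fin_cases j <;> simp [Matrix.conjTranspose_apply]

private lemma ctE10 : (!![0, 0; 1, 0] : Matrix (Fin 2) (Fin 2) ℂ)ᴴ = !![0, 1; 0, 0] := by
  ext i j; fin_cases i <;> fin_cases j <;> simp [Matrix.conjTranspose_apply]

private lemma ctE11 : (!![0, 0; 0, 1] : Matrix (Fin 2) (Fin 2) ℂ)ᴴ = !![0, 0; 0, 1] := by
  ext i j; fin_cases i <;> fin_cases j <;> simp [Matrix.conjTranspose_apply]

private lemma trE00 : (!![1, 0; 0, 0] : Matrix (Fin 2) (Fin 2) ℂ).trace = 1 := by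
  simp [Matrix.trace_fin_two]

private lemma trE01 : (!![0, 1; 0, 0] : Matrix (Fin 2) (Fin 2) ℂ).trace = 0 := by
  simp [Matrix.trace_fin_two]

private lemma trE10 : (!![0, 0; 1, 0] : Matrix (Fin 2) (Fin 2) ℂ).trace = 0 := by
  simp [Matrix.trace_fin_two]

private lemma trE11 : (!![0, 0; 0, 1] : Matrix (Fin 2) (Fin 2) ℂ).trace = 1 := by
  simp [Matrix.trace_fin_two]

private lemma kron_conjT {l m n p : Type*} (A : Matrix l m ℂ) (B : Matrix n p ℂ) :
    (A ⊗ₖ B)ᴴ = Aᴴ ⊗ₖ Bᴴ := by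
  ext ⟨i, a⟩ ⟨j, b⟩
  simp [Matrix.conjTranspose_apply, Matrix.kroneckerMap_apply, mul_comm]

private lemma block_key {d : ℕ} (A B C D A' B' C' D' : Matrix (Fin d) (Fin d) ℂ) :
    (A ⊗ₖ (!![1, 0; 0, 0] : Matrix (Fin 2) (Fin 2) ℂ) + B ⊗ₖ (!![0, 1; 0, 0] : Matrix (Fin 2) (Fin 2) ℂ)
      + C ⊗ₖ (!![0, 0; 1, 0] : Matrix (Fin 2) (Fin 2) ℂ) + D ⊗ₖ (!![0, 0; 0, 1] : Matrix (Fin 2) (Fin 2) ℂ))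
    * (A' ⊗ₖ (!![1, 0; 0, 0] : Matrix (Fin 2) (Fin 2) ℂ) + B' ⊗ₖ (!![0, 1; 0, 0] : Matrix (Fin 2) (Fin 2) ℂ)
      + C' ⊗ₖ (!![0, 0; 1, 0] : Matrix (Fin 2) (Fin 2) ℂ) + D' ⊗ₖ (!![0, 0; 0, 1] : Matrix (Fin 2) (Fin 2) ℂ))
    = (A * A' + B * C') ⊗ₖ (!![1, 0; 0, 0] : Matrix (Fin 2) (Fin 2) ℂ)
      + (A * B' + B * D') ⊗ₖ (!![0, 1; 0, 0] : Matrix (Fin 2) (Fin 2) ℂ)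
      + (C * A' + D * C') ⊗ₖ (!![0, 0; 1, 0] : Matrix (Fin 2) (Fin 2) ℂ)
      + (C * B' + D * D') ⊗ₖ (!![0, 0; 0, 1] : Matrix (Fin 2) (Fin 2) ℂ) := by
  simp only [Matrix.add_mul, Matrix.mul_add, ← Matrix.mul_kronecker_mul,
    mE00_00, mE00_01, mE00_10, mE00_11, mE01_00, mE01_01, mE01_10, mE01_11, mE10_00, mE10_01, mE10_10, mE10_11, mE11_00, mE11_01, mE11_10, mE11_11, Matrix.kronecker_zero, Matrix.add_kronecker,
    add_zero, zero_add]
  abel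

/-- Block construction of a Naimark extension of a dichotomic POVM `{E, 1 - E}` with
two-dimensional ancilla and ancilla state `|0⟩⟨0|`. Here `S = √(E(1-E))` is the positive
semidefinite square root and `U` is an arbitrary unitary. -/
theorem dichotomic_Naimark_extension
    {d : ℕ} (E U S : Matrix (Fin d) (Fin d) ℂ)
    (hE : E.PosSemidef) (hE' : ((1 : Matrix (Fin d) (Fin d) ℂ) - E).PosSemidef)
    (hU : Uᴴ * U = 1 ∧ U * Uᴴ = 1)
    (hS : S.PosSemidef) (hS2 : S * S = E * (1 - E))
    (P₁ P₂ : Matrix (Fin d × Fin 2) (Fin d × Fin 2) ℂ)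
    (hP₁ : P₁ = E ⊗ₖ (!![1, 0; 0, 0] : Matrix (Fin 2) (Fin 2) ℂ)
        + (-(S * Uᴴ)) ⊗ₖ (!![0, 1; 0, 0] : Matrix (Fin 2) (Fin 2) ℂ)
        + (-(U * S)) ⊗ₖ (!![0, 0; 1, 0] : Matrix (Fin 2) (Fin 2) ℂ)
        + (U * (1 - E) * Uᴴ) ⊗ₖ (!![0, 0; 0, 1] : Matrix (Fin 2) (Fin 2) ℂ))
    (hP₂ : P₂ = 1 - P₁) :
    (P₁.IsHermitian ∧ P₁ * P₁ = P₁) ∧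
    (P₂.IsHermitian ∧ P₂ * P₂ = P₂) ∧
    (∀ ρ : Matrix (Fin d) (Fin d) ℂ,
      (ρ * E).trace = ((ρ ⊗ₖ (!![1, 0; 0, 0] : Matrix (Fin 2) (Fin 2) ℂ)) * P₁).trace ∧
      (ρ * (1 - E)).trace
        = ((ρ ⊗ₖ (!![1, 0; 0, 0] : Matrix (Fin 2) (Fin 2) ℂ)) * P₂).trace) := by
  have hEH : Eᴴ = E := hE.1
  have hSH : Sᴴ = S := hS.1
  have h1EH : ((1 : Matrix (Fin d) (Fin d) ℂ) - E)ᴴ = 1 - E := hE'.1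
  have hUU : Uᴴ * U = 1 := hU.1
  have hES : E * S = S * E := commute_of_commute_sq hS (by rw [hS2]; noncomm_ring)
  -- Hermiticity of P₁
  have hP₁H : P₁.IsHermitian := by
    show P₁ᴴ = P₁
    rw [hP₁]
    simp only [Matrix.conjTranspose_add, kron_conjT, Matrix.conjTranspose_neg,
      Matrix.conjTranspose_mul, Matrix.conjTranspose_conjTranspose, hEH, hSH, h1EH,
      ctE00, ctE01, ctE10, ctE11, Matrix.mul_assoc]
    abel
  -- Idempotency of P₁
  have hb00 : E * E + (-(S * Uᴴ)) * (-(U * S)) = E := by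
    have h1 : (-(S * Uᴴ)) * (-(U * S)) = S * (Uᴴ * U) * S := by noncomm_ring
    rw [h1, hUU, Matrix.mul_one, hS2]
    noncomm_ring
  have hb01 : E * (-(S * Uᴴ)) + (-(S * Uᴴ)) * (U * (1 - E) * Uᴴ) = -(S * Uᴴ) := by
    have h1 : (-(S * Uᴴ)) * (U * (1 - E) * Uᴴ) = -(S * (Uᴴ * U) * ((1 - E) * Uᴴ)) := by
      noncomm_ring
    have h2 : E * (-(S * Uᴴ)) = -((E * S) * Uᴴ) := by noncomm_ring
    rw [h1, h2, hUU, Matrix.mul_one, hES]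
    noncomm_ring
  have hb10 : (-(U * S)) * E + (U * (1 - E) * Uᴴ) * (-(U * S)) = -(U * S) := by
    have h1 : (U * (1 - E) * Uᴴ) * (-(U * S)) = -(U * ((1 - E) * ((Uᴴ * U) * S))) := by
      noncomm_ring
    have h2 : (-(U * S)) * E = -(U * (S * E)) := by noncomm_ring
    rw [h1, h2, hUU, Matrix.one_mul, ← hES]
    noncomm_ring
  have hb11 : (-(U * S)) * (-(S * Uᴴ)) + (U * (1 - E) * Uᴴ) * (U * (1 - E) * Uᴴ)
      = U * (1 - E) * Uᴴ := by
    have h1 : (U * (1 - E) * Uᴴ) * (U * (1 - E) * Uᴴ)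
        = U * ((1 - E) * ((Uᴴ * U) * ((1 - E) * Uᴴ))) := by noncomm_ring
    have h2 : (-(U * S)) * (-(S * Uᴴ)) = U * ((S * S) * Uᴴ) := by noncomm_ring
    rw [h1, h2, hUU, Matrix.one_mul, hS2]
    noncomm_ring
  have hP₁idem : P₁ * P₁ = P₁ := by
    rw [hP₁, block_key, hb00, hb01, hb10, hb11]
  -- traces
  have tr1 : ∀ ρ : Matrix (Fin d) (Fin d) ℂ,
      ((ρ ⊗ₖ (!![1, 0; 0, 0] : Matrix (Fin 2) (Fin 2) ℂ)) * P₁).trace = (ρ * E).trace := by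
    intro ρ
    rw [hP₁]
    simp only [Matrix.mul_add, ← Matrix.mul_kronecker_mul, mE00_00, mE00_01, mE00_10,
      mE00_11, Matrix.kronecker_zero, Matrix.trace_add, Matrix.trace_zero,
      Matrix.trace_kronecker, trE00, trE01, mul_one, mul_zero, add_zero]
  refine ⟨⟨hP₁H, hP₁idem⟩, ⟨?_, ?_⟩, fun ρ => ⟨(tr1 ρ).symm, ?_⟩⟩
  · show P₂ᴴ = P₂
    rw [hP₂, Matrix.conjTranspose_sub, Matrix.conjTranspose_one, hP₁H]
  · have h3 : (1 - P₁) * (1 - P₁) = 1 - P₁ - P₁ + P₁ * P₁ := by noncomm_ring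
    rw [hP₂, h3, hP₁idem]
    abel
  · calc (ρ * (1 - E)).trace = ρ.trace - (ρ * E).trace := by
          rw [Matrix.mul_sub, Matrix.mul_one, Matrix.trace_sub]
      _ = (ρ ⊗ₖ (!![1, 0; 0, 0] : Matrix (Fin 2) (Fin 2) ℂ)).trace
            - ((ρ ⊗ₖ (!![1, 0; 0, 0] : Matrix (Fin 2) (Fin 2) ℂ)) * P₁).trace := by
          rw [Matrix.trace_kronecker, trE00, mul_one, tr1]
      _ = ((ρ ⊗ₖ (!![1, 0; 0, 0] : Matrix (Fin 2) (Fin 2) ℂ)) * P₂).trace := by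
          rw [hP₂, Matrix.mul_sub, Matrix.mul_one, Matrix.trace_sub]
end

section
/- Let λ_1, λ_2 ∈ [0,1) and θ ∈ (0, π) satisfy λ_1 λ_2 = sin θ · √((1−λ_1²)(1−λ_2²)) (equivalently, λ_1² + λ_2² = 1 − λ_1² λ_2² cot² θ). Then the unitary matrix W = e^{iθ} σz satisfies all three of the following conditions with n̂_1·σ⃗ = σx and n̂_2·σ⃗ = σy: (i) λ_1 λ_2 [σx, σy] = √(1−λ_1²) √(1−λ_2²) (W − W†); (ii) λ_1 √(1−λ_2²) {σx/2, W} − λ_2 √(1−λ_1²) W† {σy/2, W} = 0; (iii) λ_1 λ_2 [W σx W†, σy] + √((1−λ_1²)(1−λ_2²)) (W − W†) = 0. -/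
set_option maxHeartbeats 1000000


open Matrix ComplexOrder

/-- The Pauli matrices. -/
def σx : Matrix (Fin 2) (Fin 2) ℂ := !![0, 1; 1, 0]
def σy : Matrix (Fin 2) (Fin 2) ℂ := !![0, -Complex.I; Complex.I, 0]
def σz : Matrix (Fin 2) (Fin 2) ℂ := !![1, 0; 0, -1]

/-- For unsharpness parameters satisfying `λ₁ λ₂ = sin θ √((1-λ₁²)(1-λ₂²))`, the unitary
`W = e^{iθ} σz` satisfies the three compatibility conditions for the unsharp `σx` and `σy`
observables. -/
theorem exp_theta_sigma_z_satisfies_compatibility_conditions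
    (l₁ l₂ θ : ℝ)
    (hl₁ : l₁ ∈ Set.Ico (0 : ℝ) 1) (hl₂ : l₂ ∈ Set.Ico (0 : ℝ) 1)
    (hθ : θ ∈ Set.Ioo (0 : ℝ) Real.pi)
    (h : l₁ * l₂ = Real.sin θ * Real.sqrt ((1 - l₁ ^ 2) * (1 - l₂ ^ 2)))
    (W : Matrix (Fin 2) (Fin 2) ℂ)
    (hW : W = Complex.exp (θ * Complex.I) • σz) :
    (((l₁ * l₂ : ℝ) : ℂ) • (σx * σy - σy * σx)
      = ((Real.sqrt (1 - l₁ ^ 2) * Real.sqrt (1 - l₂ ^ 2) : ℝ) : ℂ) • (W - Wᴴ)) ∧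
    (((l₁ * Real.sqrt (1 - l₂ ^ 2) : ℝ) : ℂ)
        • (((1 / 2 : ℂ) • σx) * W + W * ((1 / 2 : ℂ) • σx))
      - ((l₂ * Real.sqrt (1 - l₁ ^ 2) : ℝ) : ℂ)
        • (Wᴴ * (((1 / 2 : ℂ) • σy) * W + W * ((1 / 2 : ℂ) • σy))) = 0) ∧
    (((l₁ * l₂ : ℝ) : ℂ) • ((W * σx * Wᴴ) * σy - σy * (W * σx * Wᴴ))
      + ((Real.sqrt ((1 - l₁ ^ 2) * (1 - l₂ ^ 2)) : ℝ) : ℂ) • (W - Wᴴ) = 0) := by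
  have h1 : (0:ℝ) ≤ 1 - l₁ ^ 2 := by nlinarith [hl₁.1, hl₁.2]
  have hsq : Real.sqrt ((1 - l₁ ^ 2) * (1 - l₂ ^ 2))
      = Real.sqrt (1 - l₁ ^ 2) * Real.sqrt (1 - l₂ ^ 2) := Real.sqrt_mul h1 _
  rw [hsq] at h
  have hc : ((l₁ * l₂ : ℝ) : ℂ)
      = (Real.sin θ : ℂ) * ((Real.sqrt (1 - l₁ ^ 2) * Real.sqrt (1 - l₂ ^ 2) : ℝ) : ℂ) := by
    push_cast [h]; ring
  have hexp : Complex.exp (θ * Complex.I)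
      = (Real.cos θ : ℂ) + (Real.sin θ : ℂ) * Complex.I := by
    rw [Complex.exp_mul_I]; push_cast; ring
  have e1 : W = !![(Real.cos θ : ℂ) + (Real.sin θ : ℂ) * Complex.I, 0;
      0, -((Real.cos θ : ℂ) + (Real.sin θ : ℂ) * Complex.I)] := by
    rw [hW, hexp]; ext i j; fin_cases i <;> fin_cases j <;> simp [σz]
  have e2 : Wᴴ = !![(Real.cos θ : ℂ) - (Real.sin θ : ℂ) * Complex.I, 0;
      0, -((Real.cos θ : ℂ) - (Real.sin θ : ℂ) * Complex.I)] := by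
    rw [e1]; ext i j; fin_cases i <;> fin_cases j <;>
      simp [Matrix.conjTranspose_apply, Complex.ext_iff]
  rw [e2, e1]
  have hsc := Real.sin_sq_add_cos_sq θ
  refine ⟨?_, ?_, ?_⟩
  all_goals
    ext i j
    fin_cases i <;> fin_cases j
    all_goals
      simp [σx, σy, σz, Matrix.mul_apply, Fin.sum_univ_succ, hsq, hc, Complex.ext_iff,
        Complex.sin_ofReal_re, Complex.cos_ofReal_re]
    all_goals try ring
    all_goals try (constructor <;> exact trivial)
    all_goals
      refine ⟨Or.inr trivial, ?_⟩
      first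
        | linear_combination
            (2 * Real.sin θ * Real.sqrt (1 - l₁ ^ 2) * Real.sqrt (1 - l₂ ^ 2)) * hsc
        | linear_combination
            (-(2 * Real.sin θ * Real.sqrt (1 - l₁ ^ 2) * Real.sqrt (1 - l₂ ^ 2))) * hsc
end

section
/- For λ_1, λ_2 ∈ [0,1], the unsharp qubit POVMs A = {(1/2)(1 + λ_1 σx), (1/2)(1 − λ_1 σx)} and B = {(1/2)(1 + λ_2 σy), (1/2)(1 − λ_2 σy)} on ℂ² are jointly measurable if and only if λ_1² + λ_2² ≤ 1. -/
open Matrix ComplexOrder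

lemma tri_ineq (a b c d : ℝ) :
    Real.sqrt ((a+c)^2+(b+d)^2) ≤ Real.sqrt (a^2+b^2) + Real.sqrt (c^2+d^2) := by
  have h2 : a*c + b*d ≤ Real.sqrt ((a^2+b^2)*(c^2+d^2)) := by
    have h := Real.sqrt_le_sqrt (show (a*c+b*d)^2 ≤ (a^2+b^2)*(c^2+d^2) by
      nlinarith [sq_nonneg (a*d - b*c)])
    calc a*c+b*d ≤ |a*c+b*d| := le_abs_self _
      _ = Real.sqrt ((a*c+b*d)^2) := (Real.sqrt_sq_eq_abs _).symm
      _ ≤ _ := h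
  have h1 : Real.sqrt (a^2+b^2) * Real.sqrt (c^2+d^2) = Real.sqrt ((a^2+b^2)*(c^2+d^2)) :=
    (Real.sqrt_mul (by positivity) _).symm
  have e1 := Real.sq_sqrt (show (0:ℝ) ≤ a^2+b^2 by positivity)
  have e2 := Real.sq_sqrt (show (0:ℝ) ≤ c^2+d^2 by positivity)
  have h3 : (a+c)^2+(b+d)^2 ≤ (Real.sqrt (a^2+b^2) + Real.sqrt (c^2+d^2))^2 := by
    nlinarith [h2, h1]
  calc Real.sqrt ((a+c)^2+(b+d)^2)
      ≤ Real.sqrt ((Real.sqrt (a^2+b^2) + Real.sqrt (c^2+d^2))^2) := Real.sqrt_le_sqrt h3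
    _ = _ := Real.sqrt_sq (by positivity)

lemma key_ineq (p q u v a b : ℝ) (hp : 0 ≤ p) (hq : 0 ≤ q)
    (h1 : u^2+v^2 ≤ p*q) (h4 : (a-u)^2+(b-v)^2 ≤ p*q) :
    Real.sqrt (a^2+b^2) ≤ p + q := by
  have t := tri_ineq u v (a-u) (b-v)
  have e : (u+(a-u))^2+(v+(b-v))^2 = a^2+b^2 := by ring
  rw [e] at t
  have s1 : Real.sqrt (u^2+v^2) ≤ Real.sqrt (p*q) := Real.sqrt_le_sqrt h1
  have s2 : Real.sqrt ((a-u)^2+(b-v)^2) ≤ Real.sqrt (p*q) := Real.sqrt_le_sqrt h4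
  have s3 : Real.sqrt (p*q) ≤ (p+q)/2 := by
    rw [show (p+q)/2 = Real.sqrt (((p+q)/2)^2) from (Real.sqrt_sq (by positivity)).symm]
    exact Real.sqrt_le_sqrt (by nlinarith [sq_nonneg (p-q)])
  linarith

lemma psd2 {M : Matrix (Fin 2) (Fin 2) ℂ} (h : M.PosSemidef) :
    (0 ≤ (M 0 0).re ∧ (M 0 0).im = 0) ∧ (0 ≤ (M 1 1).re ∧ (M 1 1).im = 0) ∧
    ((M 1 0).re = (M 0 1).re ∧ (M 1 0).im = -(M 0 1).im) ∧
    (M 0 1).re^2 + (M 0 1).im^2 ≤ (M 0 0).re * (M 1 1).re := by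
  have herm := congrFun (congrFun h.1 1) 0
  simp [Matrix.conjTranspose_apply, Complex.ext_iff] at herm
  have h00 := h.dotProduct_mulVec_nonneg (Pi.single 0 1)
  have h11 := h.dotProduct_mulVec_nonneg (Pi.single 1 1)
  simp [Matrix.mulVec, dotProduct, Fin.sum_univ_two, Pi.single_apply, Complex.le_def] at h00 h11
  have hd : 0 ≤ M.det := by
    rw [h.1.det_eq_prod_eigenvalues]
    have : (0:ℂ) ≤ ((∏ i, h.1.eigenvalues i : ℝ) : ℂ) :=
      Complex.zero_le_real.mpr (Finset.prod_nonneg fun i _ => h.eigenvalues_nonneg i)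
    convert this using 1
    push_cast
    rfl
  rw [Matrix.det_fin_two, Complex.le_def] at hd
  simp [Complex.mul_re, Complex.mul_im] at hd
  refine ⟨⟨h00.1, h00.2.symm⟩, ⟨h11.1, h11.2.symm⟩, ⟨herm.1.symm, herm.2.symm⟩, ?_⟩
  rw [← herm.1, ← herm.2, ← h00.2, ← h11.2] at hd
  nlinarith [hd.1]

lemma amgm (A B s : ℝ) (hA : 0 ≤ A) (hB : 0 ≤ B) (h : s^2 ≤ A*B) : 0 ≤ A + B + 2*s := by
  nlinarith [sq_nonneg (A-B), sq_nonneg (A+B), sq_nonneg (A+B+2*s)]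

lemma aux_psd (c d : ℝ) (h : c^2 + d^2 ≤ 1) :
    ((1/4 : ℂ) • (1 + (c:ℂ) • σx + (d:ℂ) • σy)).PosSemidef := by
  refine Matrix.PosSemidef.of_dotProduct_mulVec_nonneg ?_ ?_
  · ext i j
    fin_cases i <;> fin_cases j <;>
      simp [σx, σy, Matrix.conjTranspose_apply, Matrix.one_apply, Complex.ext_iff]
  · intro x
    simp only [Matrix.mulVec, dotProduct, Fin.sum_univ_two, Matrix.smul_apply,
      Matrix.add_apply, Matrix.one_apply, σx, σy, Complex.le_def]
    simp [Matrix.one_fin_two, Complex.ext_iff, Complex.mul_re, Complex.mul_im, Complex.add_re]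
    constructor
    · set a0 := (x 0).re; set b0 := (x 0).im; set a1 := (x 1).re; set b1 := (x 1).im
      have hAB : (c*(a0*a1+b0*b1)+d*(a0*b1-b0*a1))^2 ≤ (a0^2+b0^2)*(a1^2+b1^2) := by
        nlinarith [sq_nonneg (d*(a0*a1+b0*b1) - c*(a0*b1-b0*a1)),
          mul_nonneg (by linarith : (0:ℝ) ≤ 1 - (c^2+d^2))
            (by positivity : (0:ℝ) ≤ (a0*a1+b0*b1)^2 + (a0*b1-b0*a1)^2)]
      have := amgm (a0^2+b0^2) (a1^2+b1^2) (c*(a0*a1+b0*b1)+d*(a0*b1-b0*a1))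
        (by positivity) (by positivity) hAB
      nlinarith [this]
    · ring

set_option maxHeartbeats 1600000

/-- The unsharp qubit observables `{(1/2)(1 ± λ₁ σx)}` and `{(1/2)(1 ± λ₂ σy)}` are
jointly measurable iff `λ₁² + λ₂² ≤ 1`. -/
theorem unsharp_sigma_x_sigma_y_compatibility_region
    (l₁ l₂ : ℝ) (hl₁ : l₁ ∈ Set.Icc (0 : ℝ) 1) (hl₂ : l₂ ∈ Set.Icc (0 : ℝ) 1) :
    JointlyMeasurable2
      ![(1 / 2 : ℂ) • (1 + (l₁ : ℂ) • σx), (1 / 2 : ℂ) • (1 - (l₁ : ℂ) • σx)]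
      ![(1 / 2 : ℂ) • (1 + (l₂ : ℂ) • σy), (1 / 2 : ℂ) • (1 - (l₂ : ℂ) • σy)]
    ↔ l₁ ^ 2 + l₂ ^ 2 ≤ 1 := by
  constructor
  · rintro ⟨G, ⟨hpsd, hsum⟩, hA, hB⟩
    have hA0 := hA 0
    have hA1 := hA 1
    have hB0 := hB 0
    rw [Fin.sum_univ_two] at hA0 hA1 hB0
    simp only [Matrix.cons_val_zero, Matrix.cons_val_one, Matrix.head_cons] at hA0 hA1 hB0
    -- entry relations
    have q00 : G (0,1) 0 0 = 1/2 - G (0,0) 0 0 := by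
      have := congrFun (congrFun hA0 0) 0
      simp [σx, Matrix.add_apply, Matrix.one_apply] at this
      linear_combination this
    have q11 : G (0,1) 1 1 = 1/2 - G (0,0) 1 1 := by
      have := congrFun (congrFun hA0 1) 1
      simp [σx, Matrix.add_apply, Matrix.one_apply] at this
      linear_combination this
    have q01 : G (0,1) 0 1 = (l₁:ℂ)/2 - G (0,0) 0 1 := by
      have := congrFun (congrFun hA0 0) 1
      simp [σx, Matrix.add_apply, Matrix.one_apply] at this
      linear_combination this
    have r00 : G (1,0) 0 0 = 1/2 - G (0,0) 0 0 := by
      have := congrFun (congrFun hB0 0) 0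
      simp [σy, Matrix.add_apply, Matrix.one_apply] at this
      linear_combination this
    have r11 : G (1,0) 1 1 = 1/2 - G (0,0) 1 1 := by
      have := congrFun (congrFun hB0 1) 1
      simp [σy, Matrix.add_apply, Matrix.one_apply] at this
      linear_combination this
    have r01 : G (1,0) 0 1 = -(l₂:ℂ)*Complex.I/2 - G (0,0) 0 1 := by
      have := congrFun (congrFun hB0 0) 1
      simp [σy, Matrix.add_apply, Matrix.one_apply] at this
      linear_combination this
    have s00 : G (1,1) 0 0 = G (0,0) 0 0 := by
      have := congrFun (congrFun hA1 0) 0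
      simp [σx, Matrix.add_apply, Matrix.one_apply] at this
      rw [r00] at this
      linear_combination this
    have s11 : G (1,1) 1 1 = G (0,0) 1 1 := by
      have := congrFun (congrFun hA1 1) 1
      simp [σx, Matrix.add_apply, Matrix.one_apply] at this
      rw [r11] at this
      linear_combination this
    have s01 : G (1,1) 0 1 = G (0,0) 0 1 - (l₁:ℂ)/2 + (l₂:ℂ)*Complex.I/2 := by
      have := congrFun (congrFun hA1 0) 1
      simp [σx, Matrix.add_apply, Matrix.one_apply] at this
      rw [r01] at this
      linear_combination this
    obtain ⟨⟨hp, -⟩, ⟨hq, -⟩, -, det1⟩ := psd2 (hpsd (0,0))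
    obtain ⟨⟨hp', -⟩, ⟨hq', -⟩, -, det2⟩ := psd2 (hpsd (0,1))
    obtain ⟨-, -, -, det3⟩ := psd2 (hpsd (1,0))
    obtain ⟨-, -, -, det4⟩ := psd2 (hpsd (1,1))
    rw [q00, q11, q01] at det2
    rw [q00] at hp'
    rw [q11] at hq'
    rw [r00, r11, r01] at det3
    rw [s00, s11, s01] at det4
    simp only [Complex.sub_re, Complex.sub_im, Complex.add_re, Complex.add_im,
      Complex.ofReal_re, Complex.ofReal_im, Complex.div_re, Complex.div_im,
      Complex.mul_re, Complex.mul_im, Complex.I_re, Complex.I_im, Complex.neg_re,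
      Complex.neg_im, Complex.one_re, Complex.one_im]
      at det2 det3 det4 hp' hq'
    norm_num at det2 det3 det4 hp' hq'
    simp only [Prod.mk_zero_zero] at det1 hp hq det2 det3 det4 hp' hq'
    set p := (G (0 : Fin 2 × Fin 2) 0 0).re
    set q := (G (0 : Fin 2 × Fin 2) 1 1).re
    set u := (G (0 : Fin 2 × Fin 2) 0 1).re
    set v := (G (0 : Fin 2 × Fin 2) 0 1).im
    -- now real inequalities
    have k1 : Real.sqrt ((l₁/2)^2+(-(l₂/2))^2) ≤ p + q := by
      apply key_ineq p q u v _ _ hp hq det1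
      linarith [det4]
    have k2 : Real.sqrt ((l₁/2)^2+(-(l₂/2))^2) ≤ (1/2 - p) + (1/2 - q) := by
      apply key_ineq (1/2-p) (1/2-q) (l₁/2-u) v _ _ (by linarith) (by linarith)
      · linarith [det2]
      · linarith [det3]
    have hs : Real.sqrt ((l₁/2)^2+(-(l₂/2))^2) ≤ 1/2 := by linarith
    have hsq := Real.sq_sqrt (show (0:ℝ) ≤ (l₁/2)^2+(-(l₂/2))^2 by positivity)
    nlinarith [Real.sqrt_nonneg ((l₁/2)^2+(-(l₂/2))^2), hs, hsq]
  · intro hle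
    refine ⟨fun x => (1/4:ℂ) • (1 + ((![1,-1] x.1 * l₁ : ℝ):ℂ) • σx
        + ((![1,-1] x.2 * l₂ : ℝ):ℂ) • σy), ⟨?_, ?_⟩, ?_, ?_⟩
    · intro j
      apply aux_psd
      have h1 : (![(1:ℝ),-1] j.1)^2 = 1 := by fin_cases j <;> norm_num
      have h2 : (![(1:ℝ),-1] j.2)^2 = 1 := by fin_cases j <;> norm_num
      calc (![(1:ℝ),-1] j.1 * l₁)^2 + (![(1:ℝ),-1] j.2 * l₂)^2
          = l₁^2 + l₂^2 := by rw [mul_pow, mul_pow, h1, h2]; ring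
        _ ≤ 1 := hle
    · rw [Fintype.sum_prod_type, Fin.sum_univ_two, Fin.sum_univ_two, Fin.sum_univ_two]
      ext i j
      fin_cases i <;> fin_cases j <;>
        simp only [Matrix.add_apply, Matrix.smul_apply, Matrix.one_apply, σx, σy,
          Matrix.cons_val_zero, Matrix.cons_val_one, Matrix.head_cons, Matrix.sub_apply,
          Matrix.cons_val', Matrix.cons_val_fin_one, Matrix.empty_val'] <;>
        norm_num [Complex.ext_iff] <;> ring
    · intro a
      rw [Fin.sum_univ_two]
      fin_cases a <;>
      · simp only [Fin.zero_eta, Fin.mk_one, Fin.isValue, Matrix.cons_val_zero,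
          Matrix.cons_val_one, Matrix.head_cons]
        ext i j
        fin_cases i <;> fin_cases j <;>
          simp only [Matrix.add_apply, Matrix.smul_apply, Matrix.one_apply, σx, σy,
            Matrix.cons_val_zero, Matrix.cons_val_one, Matrix.head_cons, Matrix.sub_apply,
            Matrix.cons_val', Matrix.cons_val_fin_one, Matrix.empty_val'] <;>
          norm_num [Complex.ext_iff] <;> ring
    · intro b
      rw [Fin.sum_univ_two]
      fin_cases b <;>
      · simp only [Fin.zero_eta, Fin.mk_one, Fin.isValue, Matrix.cons_val_zero,
          Matrix.cons_val_one, Matrix.head_cons]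
        ext i j
        fin_cases i <;> fin_cases j <;>
          simp only [Matrix.add_apply, Matrix.smul_apply, Matrix.one_apply, σx, σy,
            Matrix.cons_val_zero, Matrix.cons_val_one, Matrix.head_cons, Matrix.sub_apply,
            Matrix.cons_val', Matrix.cons_val_fin_one, Matrix.empty_val'] <;>
          norm_num [Complex.ext_iff] <;> ring
end

section
/- Let 0 ≤ λ ≤ 1/√3 and, for i, j, k ∈ {1,2}, define the 2×2 matrices Π(i,j,k) = (1/8)(1 + (−1)^{i+1} λ σx + (−1)^{j+1} λ σy + (−1)^{k+1} λ σz). Then each Π(i,j,k) is positive semidefinite, ∑_{i,j,k} Π(i,j,k) = 1, and the marginals recover the three unsharp spin observables: ∑_{j,k} Π(i,j,k) = (1/2)(1 + (−1)^{i+1} λ σx), ∑_{i,k} Π(i,j,k) = (1/2)(1 + (−1)^{j+1} λ σy), and ∑_{i,j} Π(i,j,k) = (1/2)(1 + (−1)^{k+1} λ σz). In particular, for 0 ≤ λ ≤ 1/√3 the three unsharp qubit POVMs {(1/2)(1 ± λ σx)}, {(1/2)(1 ± λ σy)}, {(1/2)(1 ± λ σz)} are jointly measurable. -/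
open Matrix ComplexOrder

/-- The sign `(−1)^{i+1}` for an outcome `i ∈ {1, 2}` encoded as `Fin 2` (`0 ↦ +1`, `1 ↦ −1`). -/
def sgn (i : Fin 2) : ℂ := if i = 0 then 1 else -1

/-- Three POVMs are jointly measurable (compatible). -/
def JointlyMeasurable3 {d n₁ n₂ n₃ : ℕ}
    (M₁ : Fin n₁ → Matrix (Fin d) (Fin d) ℂ)
    (M₂ : Fin n₂ → Matrix (Fin d) (Fin d) ℂ)
    (M₃ : Fin n₃ → Matrix (Fin d) (Fin d) ℂ) : Prop :=
  ∃ G : Fin n₁ × Fin n₂ × Fin n₃ → Matrix (Fin d) (Fin d) ℂ,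
    IsPOVM G ∧ (∀ i, ∑ j, ∑ k, G (i, j, k) = M₁ i) ∧
      (∀ j, ∑ i, ∑ k, G (i, j, k) = M₂ j) ∧ (∀ k, ∑ i, ∑ j, G (i, j, k) = M₃ k)

lemma key_aux (l u v w N : ℝ) (hl0 : 0 ≤ l) (h3 : 3*l^2 ≤ 1) (hN : 0 ≤ N)
    (hid : u^2+v^2+w^2 = N^2) : 0 ≤ N + l*(u+v+w) := by
  nlinarith [sq_nonneg (u-v), sq_nonneg (u-w), sq_nonneg (v-w), sq_nonneg (N + l*(u+v+w)),
    sq_nonneg (N - l*(u+v+w)), mul_nonneg hl0 hN, sq_nonneg l, sq_nonneg (u+v+w)]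

lemma pi_psd (l : ℝ) (hl0 : 0 ≤ l) (h3 : 3*l^2 ≤ 1) (e1 e2 e3 : ℝ)
    (h1 : e1^2 = 1) (h2 : e2^2 = 1) (h3' : e3^2 = 1) :
    ((1/8:ℂ) • ((1:Matrix (Fin 2) (Fin 2) ℂ) + ((e1:ℂ)*l)•σx + ((e2:ℂ)*l)•σy
      + ((e3:ℂ)*l)•σz)).PosSemidef := by
  rw [Matrix.posSemidef_iff_dotProduct_mulVec]
  constructor
  · ext i j
    fin_cases i <;> fin_cases j <;>
      simp [Matrix.conjTranspose_apply, σx, σy, σz, Matrix.one_apply, Complex.ext_iff] <;> ring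
  · intro x
    simp [dotProduct, Matrix.mulVec, Fin.sum_univ_two, σx, σy, σz,
      Matrix.one_apply, Complex.star_def]
    rw [Complex.le_def]
    constructor
    · simp [Complex.add_re, Complex.mul_re, Complex.mul_im, Complex.add_im, Complex.ofReal_re,
        Complex.ofReal_im, Complex.I_re, Complex.I_im, Complex.conj_re, Complex.conj_im]
      set p := (x 0).re; set q := (x 0).im; set r := (x 1).re; set s := (x 1).im
      have hkey := key_aux l (e3*(p^2+q^2-r^2-s^2)) (2*e1*(p*r+q*s)) (2*e2*(p*s-q*r))
        (p^2+q^2+r^2+s^2) hl0 h3 (by positivity)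
        (by linear_combination (p^2+q^2-r^2-s^2)^2 * h3' + 4*(p*r+q*s)^2*h1 + 4*(p*s-q*r)^2*h2)
      nlinarith [hkey]
    · simp [Complex.add_re, Complex.mul_re, Complex.mul_im, Complex.add_im, Complex.ofReal_re,
        Complex.ofReal_im, Complex.I_re, Complex.I_im, Complex.conj_re, Complex.conj_im]
      ring

set_option maxHeartbeats 1000000 in
/-- For `0 ≤ λ ≤ 1/√3`, the operators `Π(i,j,k)` form a joint POVM for the three unsharp
spin observables along `x`, `y`, `z`; in particular the three unsharp qubit POVMs are
jointly measurable. -/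
theorem unsharp_xyz_joint_observable
    (l : ℝ) (hl0 : 0 ≤ l) (hl : l ≤ 1 / Real.sqrt 3)
    (Pi3 : Fin 2 → Fin 2 → Fin 2 → Matrix (Fin 2) (Fin 2) ℂ)
    (hPi3 : ∀ i j k, Pi3 i j k
      = (1 / 8 : ℂ) • (1 + (sgn i * (l : ℂ)) • σx + (sgn j * (l : ℂ)) • σy
          + (sgn k * (l : ℂ)) • σz)) :
    (∀ i j k, (Pi3 i j k).PosSemidef) ∧
    (∑ i, ∑ j, ∑ k, Pi3 i j k = 1) ∧
    (∀ i, ∑ j, ∑ k, Pi3 i j k = (1 / 2 : ℂ) • (1 + (sgn i * (l : ℂ)) • σx)) ∧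
    (∀ j, ∑ i, ∑ k, Pi3 i j k = (1 / 2 : ℂ) • (1 + (sgn j * (l : ℂ)) • σy)) ∧
    (∀ k, ∑ i, ∑ j, Pi3 i j k = (1 / 2 : ℂ) • (1 + (sgn k * (l : ℂ)) • σz)) ∧
    JointlyMeasurable3
      (fun i => (1 / 2 : ℂ) • (1 + (sgn i * (l : ℂ)) • σx))
      (fun j => (1 / 2 : ℂ) • (1 + (sgn j * (l : ℂ)) • σy))
      (fun k => (1 / 2 : ℂ) • (1 + (sgn k * (l : ℂ)) • σz)) := by
  have hs3 : (0:ℝ) < Real.sqrt 3 := Real.sqrt_pos.mpr (by norm_num)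
  have h3 : 3 * l^2 ≤ 1 := by
    have h1 : l * Real.sqrt 3 ≤ 1 := by
      rw [div_eq_mul_inv, one_mul] at hl
      calc l * Real.sqrt 3 ≤ (Real.sqrt 3)⁻¹ * Real.sqrt 3 := by
            exact mul_le_mul_of_nonneg_right hl hs3.le
        _ = 1 := inv_mul_cancel₀ hs3.ne'
    nlinarith [Real.sq_sqrt (show (0:ℝ) ≤ 3 by norm_num), mul_nonneg hl0 hs3.le]
  have hsgn : ∀ i : Fin 2, ∃ e : ℝ, e^2 = 1 ∧ sgn i = (e:ℂ) := by
    intro i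
    fin_cases i
    · exact ⟨1, by norm_num, by simp [sgn]⟩
    · exact ⟨-1, by norm_num, by simp [sgn]⟩
  have hpsd : ∀ i j k, (Pi3 i j k).PosSemidef := by
    intro i j k
    rw [hPi3]
    obtain ⟨e1, he1, hs1⟩ := hsgn i
    obtain ⟨e2, he2, hs2⟩ := hsgn j
    obtain ⟨e3, he3, hs3⟩ := hsgn k
    rw [hs1, hs2, hs3]
    exact pi_psd l hl0 h3 e1 e2 e3 he1 he2 he3
  have hsum : ∑ i, ∑ j, ∑ k, Pi3 i j k = 1 := by
    simp only [hPi3, Fin.sum_univ_two]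
    ext a b
    fin_cases a <;> fin_cases b <;>
      simp [σx, σy, σz, sgn, Matrix.one_apply] <;> ring
  have hm1 : ∀ i, ∑ j, ∑ k, Pi3 i j k = (1 / 2 : ℂ) • (1 + (sgn i * (l : ℂ)) • σx) := by
    intro i
    fin_cases i <;>
    · simp only [hPi3, Fin.sum_univ_two]
      ext a b
      fin_cases a <;> fin_cases b <;>
        simp [σx, σy, σz, sgn, Matrix.one_apply] <;> ring
  have hm2 : ∀ j, ∑ i, ∑ k, Pi3 i j k = (1 / 2 : ℂ) • (1 + (sgn j * (l : ℂ)) • σy) := by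
    intro j
    fin_cases j <;>
    · simp only [hPi3, Fin.sum_univ_two]
      ext a b
      fin_cases a <;> fin_cases b <;>
        simp [σx, σy, σz, sgn, Matrix.one_apply] <;> ring
  have hm3 : ∀ k, ∑ i, ∑ j, Pi3 i j k = (1 / 2 : ℂ) • (1 + (sgn k * (l : ℂ)) • σz) := by
    intro k
    fin_cases k <;>
    · simp only [hPi3, Fin.sum_univ_two]
      ext a b
      fin_cases a <;> fin_cases b <;>
        simp [σx, σy, σz, sgn, Matrix.one_apply] <;> ring
  refine ⟨hpsd, hsum, hm1, hm2, hm3, ⟨fun p => Pi3 p.1 p.2.1 p.2.2, ⟨fun p => hpsd _ _ _, ?_⟩,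
    fun i => hm1 i, fun j => hm2 j, fun k => hm3 k⟩⟩
  have hps : ∑ p : Fin 2 × Fin 2 × Fin 2, Pi3 p.1 p.2.1 p.2.2
      = ∑ i, ∑ j, ∑ k, Pi3 i j k := by
    rw [Fintype.sum_prod_type]
    exact Finset.sum_congr rfl fun i _ => Fintype.sum_prod_type _
  rw [hps]; exact hsum
end

section
/- On ℂ² ⊗ ℂ², let P_x = |0⟩⟨0| ⊗ |0⟩⟨0| + |+⟩⟨+| ⊗ |1⟩⟨1|, where |+⟩ = (|0⟩ + |1⟩)/√2. Then: (1) P_x is an orthogonal projection (Hermitian idempotent); (2) for every 2×2 complex matrix ρ, trace((ρ ⊗ |0⟩⟨0|) * P_x) = trace(ρ * |0⟩⟨0|) and trace((ρ ⊗ |1⟩⟨1|) * P_x) = trace(ρ * |+⟩⟨+|), so that the PVM {P_x, 1 − P_x} is simultaneously a Naimark extension of the PVM {|0⟩⟨0|, |1⟩⟨1|} with ancilla state |0⟩⟨0| and of the PVM {|+⟩⟨+|, |−⟩⟨−|} with ancilla state |1⟩⟨1|; and yet (3) the PVMs {|0⟩⟨0|, |1⟩⟨1|} and {|+⟩⟨+|,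 |−⟩⟨−|} on ℂ² (with |−⟩ = (|0⟩ − |1⟩)/√2) are not jointly measurable. -/
open Matrix ComplexOrder Kronecker

/-- `|0⟩⟨0|`. -/
def ket0bra0 : Matrix (Fin 2) (Fin 2) ℂ := !![1, 0; 0, 0]
/-- `|1⟩⟨1|`. -/
def ket1bra1 : Matrix (Fin 2) (Fin 2) ℂ := !![0, 0; 0, 1]
/-- `|+⟩⟨+|`. -/
noncomputable def ketPbraP : Matrix (Fin 2) (Fin 2) ℂ := (1 / 2 : ℂ) • !![1, 1; 1, 1]
/-- `|−⟩⟨−|`. -/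
noncomputable def ketMbraM : Matrix (Fin 2) (Fin 2) ℂ := (1 / 2 : ℂ) • !![1, -1; -1, 1]

lemma psd_col_zero {M : Matrix (Fin 2) (Fin 2) ℂ} (h : M.PosSemidef) (j : Fin 2)
    (hd : M j j = 0) (i : Fin 2) : M i j = 0 := by
  have h0 : star (Pi.single j 1 : Fin 2 → ℂ) ⬝ᵥ M *ᵥ Pi.single j 1 = 0 := by
    simpa [dotProduct, mulVec, Pi.single_apply, Fin.sum_univ_succ] using hd
  have := congrFun ((h.dotProduct_mulVec_zero_iff (Pi.single j 1)).mp h0) i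
  simpa [mulVec, dotProduct, Pi.single_apply, Fin.sum_univ_succ] using this

lemma psd_diag_nonneg {M : Matrix (Fin 2) (Fin 2) ℂ} (h : M.PosSemidef) (j : Fin 2) :
    0 ≤ M j j := by
  have := h.dotProduct_mulVec_nonneg (Pi.single j 1)
  simpa [dotProduct, mulVec, Pi.single_apply, Fin.sum_univ_succ] using this

/-- A single projector `P_x = |0⟩⟨0|⊗|0⟩⟨0| + |+⟩⟨+|⊗|1⟩⟨1|` provides a Naimark extension
of the PVM `{|0⟩⟨0|, |1⟩⟨1|}` (with ancilla state `|0⟩⟨0|`) and of the PVM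
`{|+⟩⟨+|, |−⟩⟨−|}` (with ancilla state `|1⟩⟨1|`), even though these two PVMs are
not jointly measurable. -/
theorem commuting_Naimark_extensions_with_different_ancilla_states
    (Px : Matrix (Fin 2 × Fin 2) (Fin 2 × Fin 2) ℂ)
    (hPx : Px = ket0bra0 ⊗ₖ ket0bra0 + ketPbraP ⊗ₖ ket1bra1) :
    (Px.IsHermitian ∧ Px * Px = Px) ∧
    (∀ ρ : Matrix (Fin 2) (Fin 2) ℂ,
      ((ρ ⊗ₖ ket0bra0) * Px).trace = (ρ * ket0bra0).trace ∧
      ((ρ ⊗ₖ ket1bra1) * Px).trace = (ρ * ketPbraP).trace) ∧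
    ¬ JointlyMeasurable2 ![ket0bra0, ket1bra1] ![ketPbraP, ketMbraM] := by
  refine ⟨?_, ?_, ?_⟩
  · subst hPx
    constructor
    · ext ⟨i,k⟩ ⟨j,l⟩
      fin_cases i <;> fin_cases j <;> fin_cases k <;> fin_cases l <;>
        simp [ket0bra0, ket1bra1, ketPbraP, conjTranspose_apply, kroneckerMap_apply] <;> norm_num
    · ext ⟨i,k⟩ ⟨j,l⟩
      fin_cases i <;> fin_cases j <;> fin_cases k <;> fin_cases l <;>
        simp [ket0bra0, ket1bra1, ketPbraP, mul_apply, Fin.sum_univ_succ,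
          Fintype.sum_prod_type, kroneckerMap_apply] <;> norm_num
  · intro ρ
    subst hPx
    constructor <;>
    · simp [ket0bra0, ket1bra1, ketPbraP, trace, mul_apply, Fin.sum_univ_succ,
        Fintype.sum_prod_type, kroneckerMap_apply, diag]
  · rintro ⟨G, ⟨hpos, -⟩, h1, h2⟩
    have e0 : G (0,0) + G (0,1) = ket0bra0 := by simpa [Fin.sum_univ_succ] using h1 0
    have e1 : G (1,0) + G (1,1) = ket1bra1 := by simpa [Fin.sum_univ_succ] using h1 1
    have f0 : G (0,0) + G (1,0) = ketPbraP := by simpa [Fin.sum_univ_succ] using h2 0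
    have d00 : G (0,0) 1 1 = 0 := by
      have hsum : G (0,0) 1 1 + G (0,1) 1 1 = 0 := by
        have := congrFun (congrFun e0 1) 1
        simpa [ket0bra0] using this
      have n1 := psd_diag_nonneg (hpos (0,0)) 1
      have n2 := psd_diag_nonneg (hpos (0,1)) 1
      have : G (0,0) 1 1 ≤ 0 := by
        calc G (0,0) 1 1 = G (0,0) 1 1 + 0 := by ring
          _ ≤ G (0,0) 1 1 + G (0,1) 1 1 := by exact add_le_add le_rfl n2
          _ = 0 := hsum
      exact le_antisymm this n1
    have d10 : G (1,0) 0 0 = 0 := by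
      have hsum : G (1,0) 0 0 + G (1,1) 0 0 = 0 := by
        have := congrFun (congrFun e1 0) 0
        simpa [ket1bra1] using this
      have n1 := psd_diag_nonneg (hpos (1,0)) 0
      have n2 := psd_diag_nonneg (hpos (1,1)) 0
      have : G (1,0) 0 0 ≤ 0 := by
        calc G (1,0) 0 0 = G (1,0) 0 0 + 0 := by ring
          _ ≤ G (1,0) 0 0 + G (1,1) 0 0 := by exact add_le_add le_rfl n2
          _ = 0 := hsum
      exact le_antisymm this n1
    have z1 : G (0,0) 0 1 = 0 := psd_col_zero (hpos (0,0)) 1 d00 0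
    have z2 : G (1,0) 0 1 = 0 := by
      have h10 : G (1,0) 1 0 = 0 := psd_col_zero (hpos (1,0)) 0 d10 1
      have := congrFun (congrFun (hpos (1,0)).isHermitian 1) 0
      rw [conjTranspose_apply, h10] at this
      exact star_eq_zero.mp this
    have := congrFun (congrFun f0 0) 1
    rw [Matrix.add_apply, z1, z2] at this
    simp [ketPbraP] at this
end

section
/- For λ ∈ [0,1], on ℂ² ⊗ ℂ² define P(1) = (1/2)(1 + λσx) ⊗ |0⟩⟨0| + (√(1−λ²)/2) · 1 ⊗ |0⟩⟨1| + (√(1−λ²)/2) · 1 ⊗ |1⟩⟨0| + (1/2)(1 − λσx) ⊗ |1⟩⟨1| and Q(1) = (1/2)(1 + λσy) ⊗ |0⟩⟨0| + (√(1−λ²)/2) · 1 ⊗ |0⟩⟨1| + (√(1−λ²)/2) · 1 ⊗ |1⟩⟨0| + (1/2)(1 − λσy) ⊗ |1⟩⟨1|, and set P(2) = 1 − P(1), Q(2) = 1 − Q(1). Then: (1) P(1) and Q(1) are orthogonal projections; (2) for every 2×2 matrix ρ and i ∈ {1,2}, trace(ρ * (1/2)(1 + (−1)^{i+1} λσx))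 = trace((ρ ⊗ |0⟩⟨0|) * P(i)) and trace(ρ * (1/2)(1 + (−1)^{i+1} λσy)) = trace((ρ ⊗ |0⟩⟨0|) * Q(i)), so {P(1),P(2)} and {Q(1),Q(2)} are Naimark extensions of the unsharp σx and σy POVMs with the same ancilla state |0⟩⟨0|; and (3) the commutator [P(1), Q(1)] equals (λ²/2) i σz ⊗ |0⟩⟨0| + (λ√(1−λ²)/2)(σx − σy) ⊗ |0⟩⟨1| + (λ√(1−λ²)/2)(σy − σx) ⊗ |1⟩⟨0| + (λ²/2) i σz ⊗ |1⟩⟨1|, which is nonzero for every λ with 0 < λ ≤ 1. -/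
set_option maxHeartbeats 8000000


open Matrix ComplexOrder Kronecker

/-- The ancilla matrix units `|a⟩⟨b|`. -/
def e00 : Matrix (Fin 2) (Fin 2) ℂ := !![1, 0; 0, 0]
def e01 : Matrix (Fin 2) (Fin 2) ℂ := !![0, 1; 0, 0]
def e10 : Matrix (Fin 2) (Fin 2) ℂ := !![0, 0; 1, 0]
def e11 : Matrix (Fin 2) (Fin 2) ℂ := !![0, 0; 0, 1]


private lemma comm_entry_ne (l s : ℝ) (hlpos : 0 < l)
    (h0 : (((l ^ 2 / 2 : ℝ) : ℂ) • (Complex.I • σz)) ⊗ₖ e00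
        + (((l * s / 2 : ℝ) : ℂ) • (σx - σy)) ⊗ₖ e01
        + (((l * s / 2 : ℝ) : ℂ) • (σy - σx)) ⊗ₖ e10
        + (((l ^ 2 / 2 : ℝ) : ℂ) • (Complex.I • σz)) ⊗ₖ e11 = 0) : False := by
  have h1 := congrFun (congrFun h0 (⟨0, 0⟩ : Fin 2 × Fin 2)) (⟨0, 0⟩ : Fin 2 × Fin 2)
  simp [σx, σy, σz, e00, e01, e10, e11, Matrix.kroneckerMap_apply, Complex.ext_iff] at h1
  nlinarith

/-- Common but non-commuting Naimark extensions (with the same ancilla state `|0⟩⟨0|`) of the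
unsharp `σx` and `σy` qubit observables: `P 1, Q 1` are projections, the trace statistics of
the unsharp observables are reproduced, and yet `[P 1, Q 1] ≠ 0` for all `0 < λ ≤ 1`. -/
theorem noncommuting_Naimark_extensions_of_compatible_unsharp_observables
    (l : ℝ) (hl : l ∈ Set.Icc (0 : ℝ) 1)
    (P₁ Q₁ P₂ Q₂ : Matrix (Fin 2 × Fin 2) (Fin 2 × Fin 2) ℂ)
    (hP₁ : P₁ = ((1 / 2 : ℂ) • (1 + (l : ℂ) • σx)) ⊗ₖ e00
        + (((Real.sqrt (1 - l ^ 2) / 2 : ℝ) : ℂ) • (1 : Matrix (Fin 2) (Fin 2) ℂ)) ⊗ₖ e01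
        + (((Real.sqrt (1 - l ^ 2) / 2 : ℝ) : ℂ) • (1 : Matrix (Fin 2) (Fin 2) ℂ)) ⊗ₖ e10
        + ((1 / 2 : ℂ) • (1 - (l : ℂ) • σx)) ⊗ₖ e11)
    (hQ₁ : Q₁ = ((1 / 2 : ℂ) • (1 + (l : ℂ) • σy)) ⊗ₖ e00
        + (((Real.sqrt (1 - l ^ 2) / 2 : ℝ) : ℂ) • (1 : Matrix (Fin 2) (Fin 2) ℂ)) ⊗ₖ e01
        + (((Real.sqrt (1 - l ^ 2) / 2 : ℝ) : ℂ) • (1 : Matrix (Fin 2) (Fin 2) ℂ)) ⊗ₖ e10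
        + ((1 / 2 : ℂ) • (1 - (l : ℂ) • σy)) ⊗ₖ e11)
    (hP₂ : P₂ = 1 - P₁) (hQ₂ : Q₂ = 1 - Q₁) :
    -- (1) P₁ and Q₁ are orthogonal projections
    (P₁.IsHermitian ∧ P₁ * P₁ = P₁) ∧ (Q₁.IsHermitian ∧ Q₁ * Q₁ = Q₁) ∧
    -- (2) {P₁,P₂} and {Q₁,Q₂} are Naimark extensions of the unsharp σx and σy POVMs
    -- with the same ancilla state |0⟩⟨0|
    (∀ ρ : Matrix (Fin 2) (Fin 2) ℂ,
      (ρ * ((1 / 2 : ℂ) • (1 + (l : ℂ) • σx))).trace = ((ρ ⊗ₖ e00) * P₁).trace ∧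
      (ρ * ((1 / 2 : ℂ) • (1 - (l : ℂ) • σx))).trace = ((ρ ⊗ₖ e00) * P₂).trace ∧
      (ρ * ((1 / 2 : ℂ) • (1 + (l : ℂ) • σy))).trace = ((ρ ⊗ₖ e00) * Q₁).trace ∧
      (ρ * ((1 / 2 : ℂ) • (1 - (l : ℂ) • σy))).trace = ((ρ ⊗ₖ e00) * Q₂).trace) ∧
    -- (3) the commutator [P₁, Q₁] has the stated explicit form, nonzero for 0 < λ
    (P₁ * Q₁ - Q₁ * P₁
      = (((l ^ 2 / 2 : ℝ) : ℂ) • (Complex.I • σz)) ⊗ₖ e00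
        + (((l * Real.sqrt (1 - l ^ 2) / 2 : ℝ) : ℂ) • (σx - σy)) ⊗ₖ e01
        + (((l * Real.sqrt (1 - l ^ 2) / 2 : ℝ) : ℂ) • (σy - σx)) ⊗ₖ e10
        + (((l ^ 2 / 2 : ℝ) : ℂ) • (Complex.I • σz)) ⊗ₖ e11) ∧
    (0 < l → P₁ * Q₁ - Q₁ * P₁ ≠ 0) := by
  obtain ⟨hl0, hl1⟩ := hl
  have hsq : ((Real.sqrt (1 - l ^ 2) : ℝ) : ℂ) ^ 2 = 1 - (l : ℂ) ^ 2 := by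
    rw [← Complex.ofReal_pow, Real.sq_sqrt (by nlinarith)]
    push_cast; ring
  set s : ℝ := Real.sqrt (1 - l ^ 2) with hs
  clear_value s
  subst hP₁ hQ₁ hP₂ hQ₂
  have hcomm : (((1 / 2 : ℂ) • (1 + (l : ℂ) • σx)) ⊗ₖ e00
        + (((s / 2 : ℝ) : ℂ) • (1 : Matrix (Fin 2) (Fin 2) ℂ)) ⊗ₖ e01
        + (((s / 2 : ℝ) : ℂ) • (1 : Matrix (Fin 2) (Fin 2) ℂ)) ⊗ₖ e10
        + ((1 / 2 : ℂ) • (1 - (l : ℂ) • σx)) ⊗ₖ e11)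
      * (((1 / 2 : ℂ) • (1 + (l : ℂ) • σy)) ⊗ₖ e00
        + (((s / 2 : ℝ) : ℂ) • (1 : Matrix (Fin 2) (Fin 2) ℂ)) ⊗ₖ e01
        + (((s / 2 : ℝ) : ℂ) • (1 : Matrix (Fin 2) (Fin 2) ℂ)) ⊗ₖ e10
        + ((1 / 2 : ℂ) • (1 - (l : ℂ) • σy)) ⊗ₖ e11)
      - (((1 / 2 : ℂ) • (1 + (l : ℂ) • σy)) ⊗ₖ e00
        + (((s / 2 : ℝ) : ℂ) • (1 : Matrix (Fin 2) (Fin 2) ℂ)) ⊗ₖ e01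
        + (((s / 2 : ℝ) : ℂ) • (1 : Matrix (Fin 2) (Fin 2) ℂ)) ⊗ₖ e10
        + ((1 / 2 : ℂ) • (1 - (l : ℂ) • σy)) ⊗ₖ e11)
      * (((1 / 2 : ℂ) • (1 + (l : ℂ) • σx)) ⊗ₖ e00
        + (((s / 2 : ℝ) : ℂ) • (1 : Matrix (Fin 2) (Fin 2) ℂ)) ⊗ₖ e01
        + (((s / 2 : ℝ) : ℂ) • (1 : Matrix (Fin 2) (Fin 2) ℂ)) ⊗ₖ e10
        + ((1 / 2 : ℂ) • (1 - (l : ℂ) • σx)) ⊗ₖ e11)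
      = (((l ^ 2 / 2 : ℝ) : ℂ) • (Complex.I • σz)) ⊗ₖ e00
        + (((l * s / 2 : ℝ) : ℂ) • (σx - σy)) ⊗ₖ e01
        + (((l * s / 2 : ℝ) : ℂ) • (σy - σx)) ⊗ₖ e10
        + (((l ^ 2 / 2 : ℝ) : ℂ) • (Complex.I • σz)) ⊗ₖ e11 := by
    ext ⟨i₁, i₂⟩ ⟨j₁, j₂⟩
    fin_cases i₁ <;> fin_cases i₂ <;> fin_cases j₁ <;> fin_cases j₂ <;>
      norm_num [Matrix.mul_apply, Fintype.sum_prod_type, Fin.sum_univ_succ,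
        σx, σy, σz, e00, e01, e10, e11, Matrix.kroneckerMap_apply, Matrix.one_apply] <;>
      ring
  refine ⟨⟨?_, ?_⟩, ⟨?_, ?_⟩, ?_, hcomm, ?_⟩
  · -- P₁ hermitian
    ext ⟨i₁, i₂⟩ ⟨j₁, j₂⟩
    fin_cases i₁ <;> fin_cases i₂ <;> fin_cases j₁ <;> fin_cases j₂ <;>
      norm_num [Matrix.conjTranspose_apply, σx, σy, σz, e00, e01, e10, e11,
        Matrix.kroneckerMap_apply, Matrix.one_apply]
  · ext ⟨i₁, i₂⟩ ⟨j₁, j₂⟩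
    fin_cases i₁ <;> fin_cases i₂ <;> fin_cases j₁ <;> fin_cases j₂ <;>
      norm_num [Matrix.mul_apply, Fintype.sum_prod_type, Fin.sum_univ_succ,
        σx, σy, σz, e00, e01, e10, e11, Matrix.kroneckerMap_apply, Matrix.one_apply,
        Complex.I_sq, Complex.I_mul_I] <;>
      first
        | ring1
        | linear_combination (1/4 : ℂ) * hsq
        | linear_combination (-(1/4) : ℂ) * hsq
        | linear_combination ((l:ℂ)/4) * hsq
        | linear_combination (-(l:ℂ)/4) * hsq
        | linear_combination (Complex.I/4) * hsq
        | linear_combination (-Complex.I/4) * hsq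
  · ext ⟨i₁, i₂⟩ ⟨j₁, j₂⟩
    fin_cases i₁ <;> fin_cases i₂ <;> fin_cases j₁ <;> fin_cases j₂ <;>
      norm_num [Matrix.conjTranspose_apply, σx, σy, σz, e00, e01, e10, e11,
        Matrix.kroneckerMap_apply, Matrix.one_apply]
  · ext ⟨i₁, i₂⟩ ⟨j₁, j₂⟩
    fin_cases i₁ <;> fin_cases i₂ <;> fin_cases j₁ <;> fin_cases j₂ <;>
      norm_num [Matrix.mul_apply, Fintype.sum_prod_type, Fin.sum_univ_succ,
        σx, σy, σz, e00, e01, e10, e11, Matrix.kroneckerMap_apply, Matrix.one_apply,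
        Complex.I_sq, Complex.I_mul_I] <;>
      first
        | ring1
        | linear_combination (1/4 : ℂ) * hsq
        | linear_combination (-(1/4) : ℂ) * hsq
        | linear_combination ((l:ℂ)/4) * hsq
        | linear_combination (-(l:ℂ)/4) * hsq
        | linear_combination (Complex.I/4) * hsq
        | linear_combination (-Complex.I/4) * hsq
        | linear_combination ((l:ℂ)*Complex.I/4) * hsq
        | linear_combination (-((l:ℂ)*Complex.I)/4) * hsq
        | linear_combination ((1:ℂ)/4) * hsq - ((l:ℂ)^2/4) * Complex.I_sq
        | linear_combination ((1:ℂ)/4) * hsq + ((l:ℂ)^2/4) * Complex.I_sq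
        | linear_combination ((1:ℂ)/4 + (l:ℂ)*Complex.I/4) * hsq
        | linear_combination ((1:ℂ)/4 - (l:ℂ)*Complex.I/4) * hsq
        | linear_combination ((1:ℂ)/4 + (l:ℂ)*Complex.I/4) * hsq - ((l:ℂ)^2/4) * Complex.I_sq
        | linear_combination ((1:ℂ)/4 - (l:ℂ)*Complex.I/4) * hsq - ((l:ℂ)^2/4) * Complex.I_sq
        | linear_combination ((1:ℂ)/4 + (l:ℂ)*Complex.I/4) * hsq + ((l:ℂ)^2/4) * Complex.I_sq
        | linear_combination ((1:ℂ)/4 - (l:ℂ)*Complex.I/4) * hsq + ((l:ℂ)^2/4) * Complex.I_sq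
  · intro ρ
    refine ⟨?_, ?_, ?_, ?_⟩ <;>
      norm_num [Matrix.trace, Matrix.diag, Matrix.mul_apply, Fintype.sum_prod_type,
        Fin.sum_univ_succ, σx, σy, σz, e00, e01, e10, e11, Prod.ext_iff, Fin.ext_iff,
        Matrix.kroneckerMap_apply, Matrix.one_apply] <;> ring
  · intro hlpos h0
    rw [hcomm] at h0
    exact comm_entry_ne l s hlpos h0
end
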